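/- arXiv:1304.6654 — 11 statements merged into one kernel-verified Lean document; each statement's English description precedes it below -/
import Mathlib

section
/- For all n ≥ 1, the Eulerian polynomial A_n(x) = Σ_{π ∈ S_n} x^{des(π)} admits the gamma-expansion A_n(x) = Σ_{k=0}^{⌊(n−1)/2⌋} a(n,k) x^k (1+x)^{n−1−2k}, where the coefficients a(n,k) are defined by the recurrence a(n,k) = (k+1)a(n−1,k) + (2n−4k)a(n−1,k−1) with a(1,0)=1 and a(1,k)=0 for k ≥ 1. -/
open Finset

/-- Number of descents of a permutation of `Fin n`: positions `i` with
`π(i) > π(i+1)`. -/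
noncomputable def desA (n : ℕ) (π : Equiv.Perm (Fin n)) : ℕ :=
  letI := Classical.propDecidable
  (Finset.univ.filter
    (fun i : Fin n => ∃ h : (i : ℕ) + 1 < n, π ⟨(i : ℕ) + 1, h⟩ < π i)).card

namespace EulerGamma

/-- value of permutation word at position `i`, with default `n` out of range -/
def wal (n : ℕ) (π : Equiv.Perm (Fin n)) (i : ℕ) : ℕ :=
  if h : i < n then (π ⟨i, h⟩ : ℕ) else n

lemma wal_lt {n : ℕ} (π : Equiv.Perm (Fin n)) {i : ℕ} (h : i < n) : wal n π i < n := by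
  simp [wal, h, Fin.is_lt]

lemma wal_ge {n : ℕ} (π : Equiv.Perm (Fin n)) {i : ℕ} (h : n ≤ i) : wal n π i = n := by
  simp [wal, Nat.not_lt.2 h]

lemma desA_eq {n : ℕ} (π : Equiv.Perm (Fin n)) (m : ℕ) (hm : n - 1 ≤ m) :
    desA n π = ((range m).filter (fun i => wal n π (i+1) < wal n π i)).card := by
  classical
  unfold desA
  have hpred : ∀ i : Fin n, (∃ h : (i : ℕ) + 1 < n, π ⟨(i : ℕ) + 1, h⟩ < π i) ↔
      wal n π ((i : ℕ)+1) < wal n π i := by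
    intro i
    unfold wal
    rcases lt_or_ge ((i:ℕ)+1) n with h | h
    · simp only [dif_pos h, dif_pos i.is_lt]
      constructor
      · rintro ⟨h', hlt⟩; exact hlt
      · intro hlt; exact ⟨h, hlt⟩
    · simp only [dif_neg (Nat.not_lt.2 h), dif_pos i.is_lt]
      constructor
      · rintro ⟨h', _⟩; omega
      · intro hlt; exact absurd hlt (by have := (π i).is_lt; omega)
  apply Finset.card_bij (fun (i : Fin n) _ => (i : ℕ))
  · intro i hi
    simp only [Finset.mem_filter, Finset.mem_univ, true_and] at hi
    rw [hpred i] at hi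
    simp only [Finset.mem_filter, Finset.mem_range]
    refine ⟨?_, hi⟩
    have : wal n π ((i:ℕ)+1) < n := lt_of_lt_of_le hi (by
      by_cases h : (i:ℕ) < n
      · exact le_of_lt (wal_lt π h)
      · rw [wal_ge π (Nat.not_lt.1 h)])
    have h1 : (i:ℕ) + 1 < n := by
      by_contra hc
      rw [wal_ge π (by omega)] at this; omega
    omega
  · intro i _ j _ hij; exact Fin.ext hij
  · intro i hi
    simp only [Finset.mem_filter, Finset.mem_range] at hi
    have hin : i < n := by
      have : wal n π (i+1) < n := lt_of_lt_of_le hi.2 (by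
        by_cases h : i < n
        · exact le_of_lt (wal_lt π h)
        · rw [wal_ge π (Nat.not_lt.1 h)])
      by_contra hc
      rw [wal_ge π (by omega)] at this; omega
    refine ⟨⟨i, hin⟩, ?_, rfl⟩
    simp only [Finset.mem_filter, Finset.mem_univ, true_and]
    rw [hpred ⟨i, hin⟩]
    exact hi.2

lemma desA_le {n : ℕ} (π : Equiv.Perm (Fin n)) : desA n π ≤ n - 1 := by
  rw [desA_eq π (n-1) le_rfl]
  calc _ ≤ (range (n-1)).card := Finset.card_filter_le _ _
  _ = n - 1 := Finset.card_range _


/-- insert the max element at slot `p` -/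
noncomputable def ins {n : ℕ} (p : Fin (n+1)) (σ : Equiv.Perm (Fin n)) :
    Equiv.Perm (Fin (n+1)) :=
  ((finSuccEquiv' p).trans (Equiv.optionCongr σ)).trans finSuccEquivLast.symm

lemma ins_self {n : ℕ} (p : Fin (n+1)) (σ : Equiv.Perm (Fin n)) :
    ins p σ p = Fin.last n := by
  simp [ins, finSuccEquiv'_at]

lemma ins_succAbove {n : ℕ} (p : Fin (n+1)) (σ : Equiv.Perm (Fin n)) (j : Fin n) :
    ins p σ (p.succAbove j) = (σ j).castSucc := by
  simp [ins, finSuccEquiv'_succAbove]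

lemma wal_ins {n : ℕ} (p : Fin (n+1)) (σ : Equiv.Perm (Fin n)) (i : ℕ) (hi : i ≤ n) :
    wal (n+1) (ins p σ) i =
      if i = (p : ℕ) then n else if i < (p : ℕ) then wal n σ i else wal n σ (i-1) := by
  have hi1 : i < n + 1 := by omega
  rcases eq_or_ne i (p : ℕ) with h | h
  · rw [if_pos h]
    have hp : (⟨i, hi1⟩ : Fin (n+1)) = p := Fin.ext h
    simp [wal, hi1, hp, ins_self]
  rw [if_neg h]
  rcases lt_or_gt_of_ne h with hlt | hgt
  · -- i < p
    have hin : i < n := by have := p.is_lt; omega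
    rw [if_pos hlt]
    have hsa : p.succAbove ⟨i, hin⟩ = ⟨i, hi1⟩ := by
      rw [Fin.succAbove_of_castSucc_lt]
      · rfl
      · simpa [Fin.lt_def] using hlt
    have := ins_succAbove p σ ⟨i, hin⟩
    rw [hsa] at this
    simp [wal, hi1, hin, this]
  · -- i > p
    have hin : i - 1 < n := by omega
    rw [if_neg (by omega)]
    have hsa : p.succAbove ⟨i-1, hin⟩ = ⟨i, hi1⟩ := by
      rw [Fin.succAbove_of_le_castSucc]
      · exact Fin.ext (by simp [Fin.succ]; omega)
      · simp [Fin.le_def]; omega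
    have := ins_succAbove p σ ⟨i-1, hin⟩
    rw [hsa] at this
    simp [wal, hi1, hin, this]


lemma wal_le {n : ℕ} (σ : Equiv.Perm (Fin n)) (i : ℕ) : wal n σ i ≤ n := by
  by_cases h : i < n
  · exact le_of_lt (wal_lt σ h)
  · rw [wal_ge σ (Nat.not_lt.1 h)]

/-- slot condition: inserting max at slot `P` does not create a new descent -/
def cnd {n : ℕ} (σ : Equiv.Perm (Fin n)) (P : ℕ) : Prop :=
  P = n ∨ (1 ≤ P ∧ wal n σ P < wal n σ (P-1))

instance {n : ℕ} (σ : Equiv.Perm (Fin n)) (P : ℕ) : Decidable (cnd σ P) := by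
  unfold cnd; infer_instance

lemma des_ins {n : ℕ} (p : Fin (n+1)) (σ : Equiv.Perm (Fin n)) :
    desA (n+1) (ins p σ) = if cnd σ (p:ℕ) then desA n σ else desA n σ + 1 := by
  classical
  set π := ins p σ with hπ
  set P := (p : ℕ) with hP
  have hPn : P ≤ n := by have := p.is_lt; omega
  let f : ℕ → ℕ := fun i => if wal (n+1) π (i+1) < wal (n+1) π i then 1 else 0
  let g : ℕ → ℕ := fun i => if wal n σ (i+1) < wal n σ i then 1 else 0
  have hfd : ∀ i, f i = if wal (n+1) π (i+1) < wal (n+1) π i then 1 else 0 := fun _ => rfl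
  have hgd : ∀ i, g i = if wal n σ (i+1) < wal n σ i then 1 else 0 := fun _ => rfl
  have hdesπ : desA (n+1) π = ∑ i ∈ Finset.Ico 0 (n+1), f i := by
    rw [desA_eq π (n+1) (by omega), Finset.card_filter, Finset.range_eq_Ico]
  have hdesσ : desA n σ = ∑ i ∈ Finset.Ico 0 (n+1), g i := by
    rw [desA_eq σ (n+1) (by omega), Finset.card_filter, Finset.range_eq_Ico]
  have key : ∀ i ≤ n, wal (n+1) π i =
      if i = P then n else if i < P then wal n σ i else wal n σ (i-1) :=
    fun i hi => wal_ins p σ i hi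
  have gn : g n = 0 := by
    rw [hgd, wal_ge σ (le_refl n), wal_ge σ (by omega : n ≤ n + 1)]
    simp
  rcases eq_or_lt_of_le hPn with hPeq | hPlt
  · -- P = n : insertion at the end
    have hcnd : cnd σ P := Or.inl hPeq
    rw [if_pos hcnd, hdesπ, hdesσ]
    apply Finset.sum_congr rfl
    intro i hi
    simp only [Finset.mem_Ico] at hi
    have hi' : i ≤ n := by omega
    have wπ : ∀ j ≤ n, wal (n+1) π j = wal n σ j := by
      intro j hj
      rcases eq_or_lt_of_le hj with h | h
      · rw [key j hj, if_pos (h.trans hPeq.symm), h, wal_ge σ le_rfl]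
      · rw [key j hj, if_neg (by omega), if_pos (by omega)]
    rcases eq_or_lt_of_le hi' with h | h
    · -- i = n
      rw [hfd, hgd, h, wal_ge π (by omega : n + 1 ≤ n + 1), wal_ge σ (by omega : n ≤ n + 1),
        wπ n le_rfl, wal_ge σ le_rfl]
      simp
    · -- i < n
      rw [hfd, hgd, wπ i (by omega), wπ (i+1) (by omega)]
  · -- P < n
    have hn1 : 1 ≤ n := by omega
    have split1 : ∑ i ∈ Finset.Ico 0 (n+1), f i =
        (∑ i ∈ Finset.Ico 0 P, f i) + f P + ∑ i ∈ Finset.Ico (P+1) (n+1), f i := by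
      rw [← Finset.sum_Ico_consecutive f (by omega : 0 ≤ P) (by omega : P ≤ n + 1),
        Finset.sum_eq_sum_Ico_succ_bot (by omega : P < n + 1) f]
      ring
    have fP : f P = 1 := by
      have w1 : wal (n+1) π (P+1) = wal n σ P := by
        rw [key (P+1) (by omega), if_neg (by omega), if_neg (by omega)]
        simp
      have w2 : wal (n+1) π P = n := by rw [key P (by omega), if_pos rfl]
      rw [hfd, w1, w2, if_pos (wal_lt σ hPlt)]
    have tail : ∑ i ∈ Finset.Ico (P+1) (n+1), f i = ∑ j ∈ Finset.Ico P n, g j := by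
      have hfg : ∀ i, P + 1 ≤ i → i ≤ n → f i = g (i-1) := by
        intro i h1 h2
        have wi : wal (n+1) π i = wal n σ (i-1) := by
          rw [key i h2, if_neg (by omega), if_neg (by omega)]
        rcases eq_or_lt_of_le h2 with h | h
        · -- i = n : both sides are zero
          have f0 : f i = 0 := by
            rw [hfd, h, wal_ge π (by omega : n + 1 ≤ n + 1)]
            have hb := wal_le π n
            rw [if_neg (by omega : ¬ (n + 1 < wal (n+1) π n))]
          have g0 : g (i-1) = 0 := by
            rw [hgd, (by omega : i - 1 + 1 = i), h, wal_ge σ le_rfl]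
            have hb := wal_le σ (n-1)
            rw [if_neg (by omega : ¬ (n < wal n σ (n-1)))]
          rw [f0, g0]
        · have wi1 : wal (n+1) π (i+1) = wal n σ i := by
            rw [key (i+1) (by omega), if_neg (by omega), if_neg (by omega)]
            simp
          rw [hfd, hgd, wi, wi1, (by omega : i - 1 + 1 = i)]
      rw [Finset.sum_congr rfl (fun i hi => by
        simp only [Finset.mem_Ico] at hi
        exact hfg i hi.1 (by omega))]
      apply Finset.sum_bij' (fun (i : ℕ) (_ : i ∈ Finset.Ico (P+1) (n+1)) => i - 1)
        (fun (j : ℕ) (_ : j ∈ Finset.Ico P n) => j + 1)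
      · intro i hi; simp only [Finset.mem_Ico] at hi ⊢; omega
      · intro j hj; simp only [Finset.mem_Ico] at hj ⊢; omega
      · intro i hi; simp only [Finset.mem_Ico] at hi; omega
      · intro j hj; simp only [Finset.mem_Ico] at hj; omega
      · intro i hi; rfl
    have split2 : ∑ i ∈ Finset.Ico 0 (n+1), g i =
        (∑ i ∈ Finset.Ico 0 P, g i) + ∑ j ∈ Finset.Ico P n, g j := by
      rw [← Finset.sum_Ico_consecutive g (by omega : 0 ≤ P) (by omega : P ≤ n + 1),
        Finset.sum_Ico_succ_top (by omega : P ≤ n) g, gn]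
      ring
    rcases Nat.eq_zero_or_pos P with hP0 | hP1
    · -- P = 0
      have hcnd : ¬ cnd σ P := by
        rw [cnd]; push_neg
        exact ⟨by omega, by omega⟩
      rw [if_neg hcnd, hdesπ, hdesσ, split1, split2, fP, tail, hP0]
      simp
      omega
    · -- P ≥ 1
      have hup : P - 1 + 1 = P := by omega
      have headπ : ∑ i ∈ Finset.Ico 0 P, f i =
          (∑ i ∈ Finset.Ico 0 (P-1), g i) := by
        have hs := Finset.sum_Ico_succ_top (Nat.zero_le (P-1)) f
        rw [hup] at hs
        rw [hs]
        have fP1 : f (P-1) = 0 := by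
          have w1 : wal (n+1) π (P-1+1) = n := by
            rw [hup, key P (by omega), if_pos rfl]
          have w2 : wal (n+1) π (P-1) = wal n σ (P-1) := by
            rw [key (P-1) (by omega), if_neg (by omega), if_pos (by omega)]
          rw [hfd, w1, w2]
          have hb := wal_le σ (P-1)
          rw [if_neg (by omega : ¬ (n < wal n σ (P-1)))]
        rw [fP1, add_zero]
        apply Finset.sum_congr rfl
        intro i hi
        simp only [Finset.mem_Ico] at hi
        have w1 : wal (n+1) π i = wal n σ i := by
          rw [key i (by omega), if_neg (by omega), if_pos (by omega)]
        have w2 : wal (n+1) π (i+1) = wal n σ (i+1) := by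
          rw [key (i+1) (by omega), if_neg (by omega), if_pos (by omega)]
        rw [hfd, hgd, w1, w2]
      have headσ : ∑ i ∈ Finset.Ico 0 P, g i =
          (∑ i ∈ Finset.Ico 0 (P-1), g i) + g (P-1) := by
        have hs := Finset.sum_Ico_succ_top (Nat.zero_le (P-1)) g
        rw [hup] at hs
        rw [hs]
      have hgP : g (P-1) = if wal n σ P < wal n σ (P-1) then 1 else 0 := by
        rw [hgd, hup]
      by_cases hdesc : wal n σ P < wal n σ (P-1)
      · have hcnd : cnd σ P := Or.inr ⟨hP1, hdesc⟩
        rw [if_pos hcnd, hdesπ, hdesσ, split1, split2, fP, tail, headπ, headσ, hgP,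
          if_pos hdesc]
      · have hcnd : ¬ cnd σ P := by
          rw [cnd]; push_neg
          exact ⟨by omega, fun _ => by omega⟩
        rw [if_neg hcnd, hdesπ, hdesσ, split1, split2, fP, tail, headπ, headσ, hgP,
          if_neg hdesc]
        omega


lemma card_cnd {n : ℕ} (σ : Equiv.Perm (Fin n)) :
    (Finset.univ.filter (fun p : Fin (n+1) => cnd σ (p:ℕ))).card = desA n σ + 1 := by
  classical
  rcases Nat.eq_zero_or_pos n with hn0 | hn1
  · subst hn0
    have h1 : desA 0 σ = 0 := by
      rw [desA_eq σ 0 (by omega)]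
      simp
    rw [h1]
    rw [show (Finset.univ.filter (fun p : Fin 1 => cnd σ (p:ℕ))) = {(0 : Fin 1)} from by
      ext p
      simp [Fin.fin_one_eq_zero p, cnd]]
    simp
  · let g : ℕ → ℕ := fun i => if wal n σ (i+1) < wal n σ i then 1 else 0
    have hgd : ∀ i, g i = if wal n σ (i+1) < wal n σ i then 1 else 0 := fun _ => rfl
    have hdes : desA n σ = ∑ i ∈ Finset.Ico 0 (n-1), g i := by
      rw [desA_eq σ (n-1) le_rfl, Finset.card_filter, Finset.range_eq_Ico]
    rw [Finset.card_filter]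
    rw [Fin.sum_univ_eq_sum_range (fun i => if cnd σ i then 1 else 0) (n+1)]
    rw [Finset.sum_range_succ, if_pos (show cnd σ n from Or.inl rfl)]
    rw [Finset.range_eq_Ico, Finset.sum_eq_sum_Ico_succ_bot (by omega : 0 < n)]
    rw [if_neg (by unfold cnd; omega : ¬ cnd σ 0)]
    have hterm : ∀ i, 1 ≤ i → i < n → (if cnd σ i then 1 else 0) = g (i-1) := by
      intro i h1 h2
      have : cnd σ i ↔ wal n σ i < wal n σ (i-1) := by
        unfold cnd
        constructor
        · rintro (h | h)
          · omega
          · exact h.2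
        · intro h; exact Or.inr ⟨h1, h⟩
      rw [hgd, (by omega : i - 1 + 1 = i)]
      by_cases h : wal n σ i < wal n σ (i-1)
      · rw [if_pos (this.2 h), if_pos h]
      · rw [if_neg (fun hc => h (this.1 hc)), if_neg h]
    rw [Finset.sum_congr rfl (fun i hi => by
      simp only [Finset.mem_Ico] at hi
      exact hterm i hi.1 hi.2)]
    have hbij : ∑ i ∈ Finset.Ico 1 n, g (i-1) = ∑ j ∈ Finset.Ico 0 (n-1), g j := by
      apply Finset.sum_bij' (fun (i : ℕ) (_ : i ∈ Finset.Ico 1 n) => i - 1)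
        (fun (j : ℕ) (_ : j ∈ Finset.Ico 0 (n-1)) => j + 1)
      · intro i hi; simp only [Finset.mem_Ico] at hi ⊢; omega
      · intro j hj; simp only [Finset.mem_Ico] at hj ⊢; omega
      · intro i hi; simp only [Finset.mem_Ico] at hi; omega
      · intro j hj; simp only [Finset.mem_Ico] at hj; omega
      · intro i hi; rfl
    rw [hbij, ← hdes]
    omega

lemma ins_bijective {n : ℕ} :
    Function.Bijective (fun q : Fin (n+1) × Equiv.Perm (Fin n) => ins q.1 q.2) := by
  rw [Fintype.bijective_iff_injective_and_card]
  constructor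
  · rintro ⟨p, σ⟩ ⟨p', σ'⟩ h
    simp only at h
    have hp : p = p' := by
      by_contra hne
      obtain ⟨j, hj⟩ : ∃ j, p'.succAbove j = p := Fin.exists_succAbove_eq hne
      have h1 : ins p σ p = Fin.last n := ins_self p σ
      rw [h, ← hj, ins_succAbove] at h1
      exact absurd h1 (Fin.castSucc_lt_last _).ne
    subst hp
    have hσ : σ = σ' := by
      apply Equiv.ext
      intro j
      have h2 := congrArg (fun e : Equiv.Perm (Fin (n+1)) => e (p.succAbove j)) h
      simp only [ins_succAbove] at h2
      exact Fin.castSucc_injective n h2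
    rw [hσ]
  · simp [Fintype.card_perm, Fintype.card_fin, Nat.factorial_succ]

lemma sum_ins {n : ℕ} (σ : Equiv.Perm (Fin n)) :
    ∑ p : Fin (n+1), (Polynomial.X : Polynomial ℝ) ^ desA (n+1) (ins p σ)
      = (desA n σ + 1) • (Polynomial.X : Polynomial ℝ) ^ desA n σ
        + (n - desA n σ) • (Polynomial.X : Polynomial ℝ) ^ (desA n σ + 1) := by
  classical
  have h1 : ∀ p : Fin (n+1), (Polynomial.X : Polynomial ℝ) ^ desA (n+1) (ins p σ)
      = if cnd σ (p:ℕ) then (Polynomial.X : Polynomial ℝ) ^ desA n σ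
        else (Polynomial.X : Polynomial ℝ) ^ (desA n σ + 1) := by
    intro p
    rw [des_ins p σ]
    by_cases h : cnd σ (p:ℕ)
    · rw [if_pos h, if_pos h]
    · rw [if_neg h, if_neg h]
  rw [Finset.sum_congr rfl (fun p _ => h1 p), Finset.sum_ite, Finset.sum_const,
    Finset.sum_const, card_cnd]
  congr 1
  congr 1
  have hc := Finset.card_filter_add_card_filter_not
    (s := (Finset.univ : Finset (Fin (n+1)))) (p := fun p => cnd σ (p:ℕ))
  rw [card_cnd] at hc
  simp only [Finset.card_univ, Fintype.card_fin] at hc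
  have hd : desA n σ ≤ n - 1 := desA_le σ
  omega

lemma Lstep {n : ℕ} :
    ∑ π : Equiv.Perm (Fin (n+1)), (Polynomial.X : Polynomial ℝ) ^ desA (n+1) π
      = ∑ σ : Equiv.Perm (Fin n),
          ((desA n σ + 1) • (Polynomial.X : Polynomial ℝ) ^ desA n σ
            + (n - desA n σ) • (Polynomial.X : Polynomial ℝ) ^ (desA n σ + 1)) := by
  rw [← Fintype.sum_bijective _ ins_bijective
    (fun q : Fin (n+1) × Equiv.Perm (Fin n) => (Polynomial.X : Polynomial ℝ) ^ desA (n+1) (ins q.1 q.2))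
    (fun π => (Polynomial.X : Polynomial ℝ) ^ desA (n+1) π) (fun q => rfl)]
  rw [Fintype.sum_prod_type]
  rw [Finset.sum_comm]
  exact Finset.sum_congr rfl (fun σ _ => sum_ins σ)


open Polynomial

noncomputable def Lp (n : ℕ) : Polynomial ℝ :=
  ∑ π : Equiv.Perm (Fin n), X ^ desA n π

lemma Lp_one : Lp 1 = 1 := by
  have h : ∀ π : Equiv.Perm (Fin 1), desA 1 π = 0 := by
    intro π
    rw [desA_eq π 0 (by omega)]
    simp
  rw [Lp]
  rw [Finset.sum_congr rfl (fun π _ => by rw [h π, pow_zero])]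
  rw [Finset.sum_const, Finset.card_univ]
  simp [Fintype.card_perm]

lemma Lp_rec (n : ℕ) :
    Lp (n+1) = (1 + C (n:ℝ) * X) * Lp n + (X - X^2) * derivative (Lp n) := by
  rw [Lp, Lp, Lstep, derivative_sum, Finset.mul_sum, Finset.mul_sum,
    ← Finset.sum_add_distrib]
  apply Finset.sum_congr rfl
  intro σ _
  have hd : desA n σ ≤ n - 1 := desA_le σ
  rw [derivative_X_pow]
  rcases hE : desA n σ with _ | e
  · simp only [pow_zero, zero_add, pow_one, Nat.cast_zero, Nat.cast_one, C_0, zero_mul,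
      mul_zero, Nat.sub_zero, zero_smul, one_smul, nsmul_eq_mul, C_eq_natCast]
    ring
  · have hdn : e + 1 ≤ n := by omega
    rw [nsmul_eq_mul, nsmul_eq_mul, Nat.cast_sub hdn]
    simp only [Nat.add_sub_cancel, C_eq_natCast]
    push_cast
    ring


noncomputable def Gp (a : ℕ → ℤ → ℝ) (n : ℕ) : Polynomial ℝ :=
  ∑ k ∈ Finset.range n, C (a n (k : ℤ)) * X ^ k * (1 + X) ^ (n - 1 - 2*k)

lemma azero (a : ℕ → ℤ → ℝ) (ha1' : ∀ k : ℤ, k ≠ 0 → a 1 k = 0)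
    (harec : ∀ n : ℕ, 2 ≤ n → ∀ k : ℤ,
      a n k = (k + 1) * a (n - 1) k + (2 * n - 4 * k) * a (n - 1) (k - 1)) :
    ∀ n : ℕ, 1 ≤ n → ∀ k : ℤ, (k < 0 ∨ (n:ℤ) ≤ 2*k) → a n k = 0 := by
  intro n hn
  induction n, hn using Nat.le_induction with
  | base =>
    intro k hk
    apply ha1' k
    simp only [Nat.cast_one] at hk
    omega
  | succ m hm ih =>
    intro k hk
    rw [harec (m+1) (by omega) k]
    simp only [Nat.add_sub_cancel]
    rcases lt_or_ge k 0 with hneg | hpos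
    · rw [ih k (Or.inl hneg), ih (k-1) (Or.inl (by omega))]
      ring
    · have hge : ((m:ℤ)+1) ≤ 2*k := by
        rcases hk with h | h
        · omega
        · push_cast at h; omega
      have hm2 : (m:ℤ) ≤ 2*k := by omega
      rw [ih k (Or.inr hm2)]
      by_cases h3 : 2*k = (m:ℤ)+1
      · have hcast : 2*(k:ℝ) = (m:ℝ)+1 := by exact_mod_cast congrArg (Int.cast : ℤ → ℝ) h3
        have hc : (2 * ((m+1:ℕ):ℝ) - 4 * (k:ℝ)) = 0 := by push_cast; linarith
        rw [hc]
        ring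
      · rw [ih (k-1) (Or.inr (by omega))]
        ring

lemma Gp_rec (a : ℕ → ℤ → ℝ) (n : ℕ) (hn : 1 ≤ n)
    (hz : ∀ k : ℤ, (k < 0 ∨ (n:ℤ) ≤ 2*k) → a n k = 0)
    (harec : ∀ n : ℕ, 2 ≤ n → ∀ k : ℤ,
      a n k = (k + 1) * a (n - 1) k + (2 * n - 4 * k) * a (n - 1) (k - 1)) :
    (1 + C (n:ℝ) * X) * Gp a n + (X - X^2) * derivative (Gp a n) = Gp a (n+1) := by
  rw [Gp, Gp]
  -- rewrite the RHS using the recurrence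
  have hsplit : ∀ k : ℕ, C (a (n+1) (k:ℤ)) * X ^ k * (1 + X) ^ (n + 1 - 1 - 2*k)
      = C ((((k:ℤ)):ℝ) + 1) * C (a n (k:ℤ)) * X ^ k * (1 + X) ^ (n + 1 - 1 - 2*k)
        + C (2 * ((n+1:ℕ):ℝ) - 4 * (((k:ℤ)):ℝ)) * C (a n ((k:ℤ)-1)) * X ^ k
            * (1 + X) ^ (n + 1 - 1 - 2*k) := by
    intro k
    rw [harec (n+1) (by omega) (k:ℤ)]
    simp only [Nat.add_sub_cancel]
    rw [C_add, C_mul, C_mul]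
    ring
  rw [Finset.sum_congr rfl (fun k _ => hsplit k)]
  rw [Finset.sum_add_distrib]
  -- first part: drop the top term
  rw [Finset.sum_range_succ (fun k => C ((((k:ℤ)):ℝ) + 1) * C (a n (k:ℤ)) * X ^ k
      * (1 + X) ^ (n + 1 - 1 - 2*k))]
  have htop : a n ((n:ℕ):ℤ) = 0 := hz _ (Or.inr (by omega))
  rw [htop]
  -- second part: drop the bottom term and shift
  rw [Finset.sum_range_succ' (fun k => C (2 * ((n+1:ℕ):ℝ) - 4 * (((k:ℤ)):ℝ))
      * C (a n ((k:ℤ)-1)) * X ^ k * (1 + X) ^ (n + 1 - 1 - 2*k))]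
  have hbot : a n (((0:ℕ):ℤ)-1) = 0 := hz _ (Or.inl (by omega))
  rw [hbot]
  simp only [C_0, mul_zero, zero_mul, add_zero, zero_add]
  -- now both sides are sums over range n
  rw [derivative_sum, Finset.mul_sum, Finset.mul_sum, ← Finset.sum_add_distrib,
    ← Finset.sum_add_distrib]
  apply Finset.sum_congr rfl
  intro k hk
  rw [Finset.mem_range] at hk
  by_cases h2k : n ≤ 2*k
  · have ha : a n (k:ℤ) = 0 := hz _ (Or.inr (by omega))
    have ha' : a n (((k+1:ℕ):ℤ)-1) = 0 := by
      rw [show ((k+1:ℕ):ℤ) - 1 = (k:ℤ) by push_cast; ring]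
      exact ha
    simp [ha, ha']
  · obtain ⟨m, rfl⟩ : ∃ m, n = m + 2*k + 1 := ⟨n - (2*k+1), by omega⟩
    have e1 : m + 2*k + 1 - 1 - 2*k = m := by omega
    have e2 : m + 2*k + 1 + 1 - 1 - 2*k = m + 1 := by omega
    have e3 : m + 2*k + 1 + 1 - 1 - 2*(k+1) = m - 1 := by omega
    rw [e1, e2, e3]
    have hc1 : (2 * ((m + 2*k + 1 + 1:ℕ):ℝ) - 4 * (((k+1:ℕ):ℤ):ℝ)) = 2*(m:ℝ) := by
      push_cast; ring
    have hc2 : a ((m + 2*k)+1) (((k+1:ℕ):ℤ)-1) = a ((m + 2*k)+1) (k:ℤ) := by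
      congr 1
      push_cast; ring
    rw [hc1, hc2]
    -- compute the derivative
    rw [derivative_mul, derivative_mul, derivative_C, derivative_X_pow, derivative_pow]
    simp only [derivative_add, derivative_one, derivative_X, zero_add, mul_one, zero_mul]
    have hca : C ((((k:ℕ):ℤ):ℝ) + 1) = C ((k:ℝ)) + 1 := by push_cast; simp [C_add]
    rcases k with _ | k' <;> rcases m with _ | m' <;>
      · simp only [Nat.add_sub_cancel, Nat.zero_sub, Nat.sub_zero, pow_zero, Nat.cast_zero,
          C_0, zero_mul, mul_zero, mul_one, zero_add, add_zero, pow_one]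
        push_cast
        simp only [C_add, C_mul, C_1, C_0, map_ofNat, map_one, map_zero]
        ring


lemma main_poly (a : ℕ → ℤ → ℝ) (ha1 : a 1 0 = 1) (ha1' : ∀ k : ℤ, k ≠ 0 → a 1 k = 0)
    (harec : ∀ n : ℕ, 2 ≤ n → ∀ k : ℤ,
      a n k = (k + 1) * a (n - 1) k + (2 * n - 4 * k) * a (n - 1) (k - 1)) :
    ∀ n : ℕ, 1 ≤ n → Lp n = Gp a n := by
  intro n hn
  induction n, hn using Nat.le_induction with
  | base =>
    rw [Lp_one, Gp]
    simp [ha1]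
  | succ m hm ih =>
    rw [Lp_rec m, ih, Gp_rec a m hm (azero a ha1' harec m hm) harec]

end EulerGamma


/-- The gamma-expansion of the Eulerian polynomial `A_n(x)`:
`A_n(x) = Σ_{k=0}^{⌊(n−1)/2⌋} a(n,k) x^k (1+x)^{n−1−2k}`, where `a(n,k)` is
defined by `a(1,0)=1`, `a(1,k)=0` for `k ≥ 1` (and `a(n,k)=0` for `k < 0`),
and `a(n,k) = (k+1)a(n−1,k) + (2n−4k)a(n−1,k−1)` for `n ≥ 2`. -/
theorem eulerian_gamma_expansion (a : ℕ → ℤ → ℝ)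
    (ha1 : a 1 0 = 1) (ha1' : ∀ k : ℤ, k ≠ 0 → a 1 k = 0)
    (harec : ∀ n : ℕ, 2 ≤ n → ∀ k : ℤ,
      a n k = (k + 1) * a (n - 1) k + (2 * n - 4 * k) * a (n - 1) (k - 1)) :
    ∀ n : ℕ, 1 ≤ n → ∀ x : ℝ,
      ∑ π : Equiv.Perm (Fin n), x ^ desA n π =
        ∑ k ∈ Finset.range ((n - 1) / 2 + 1),
          a n k * x ^ k * (1 + x) ^ (n - 1 - 2 * k) := by
  intro n hn x
  have h := congrArg (Polynomial.eval x) (EulerGamma.main_poly a ha1 ha1' harec n hn)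
  rw [EulerGamma.Lp, EulerGamma.Gp] at h
  simp only [Polynomial.eval_finset_sum, Polynomial.eval_mul, Polynomial.eval_pow,
    Polynomial.eval_C, Polynomial.eval_X, Polynomial.eval_add, Polynomial.eval_one] at h
  rw [h]
  symm
  apply Finset.sum_subset
  · intro k hk
    rw [Finset.mem_range] at hk ⊢
    omega
  · intro k hk hk'
    rw [Finset.mem_range] at hk hk'
    have hz : a n (k:ℤ) = 0 :=
      EulerGamma.azero a ha1' harec n hn (k:ℤ) (Or.inr (by omega))
    rw [hz, zero_mul, zero_mul]
end

section
/- For all n ≥ 1, the type B Eulerian polynomial B_n(x) admits the gamma-expansion B_n(x) = Σ_{k=0}^{⌊n/2⌋} b(n,k) x^k (1+x)^{n−2k}, where b(n,k) satisfies b(n,k) = (2k+1)b(n−1,k) + 4(n+1−2k)b(n−1,k−1) with b(1,0)=1 and b(1,k)=0 for k ≥ 1. -/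
/-!
Inserting the new extreme value `±(n+1)` at each of the `n+1` positions of a signed permutation
with `d` descents gives `2d+1` signed permutations with `d` descents and `2(n-d)+1` with `d+1`,
so `B_{n+1} = (1 + (2n+1)x) B_n + 2x(1-x) B_n'`. The same operator sends `x^k (1+x)^(n-2k)` to
`(2k+1) x^k (1+x)^(n+1-2k) + 4(n-2k) x^(k+1) (1+x)^(n-1-2k)`, which is the recurrence of `b(n,k)`;
both sides equal `1 + x` for `n = 1`.
-/

open Finset

/-- The window value of the signed permutation given by the pair `(σ, ε)`
(every signed permutation of `{±1,…,±n}` is uniquely of this form):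
at position `i` (0-indexed) the value is `±(σ(i)+1)`, with sign given by `ε i`. -/
def signedVal (n : ℕ) (σ : Equiv.Perm (Fin n)) (ε : Fin n → Bool) (i : Fin n) : ℤ :=
  if ε i then -((σ i : ℤ) + 1) else (σ i : ℤ) + 1

/-- The type `B` descent number: `#{i ∈ {0,…,n−1} : π(i) > π(i+1)}` where `π(0) = 0`. -/
noncomputable def desB (n : ℕ) (σ : Equiv.Perm (Fin n)) (ε : Fin n → Bool) : ℕ :=
  letI := Classical.propDecidable
  (Finset.univ.filter
    (fun i : Fin n =>
      (if h : (i : ℕ) = 0 then (0 : ℤ)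
        else signedVal n σ ε ⟨(i : ℕ) - 1, lt_of_le_of_lt (Nat.sub_le _ _) i.2⟩)
        > signedVal n σ ε i)).card

theorem Fin.insertNth_apply_mk {α : Type*} {m : ℕ} (p : Fin (m + 1)) (a : α) (w : Fin m → α)
    (i : ℕ) (hi : i < m + 1) :
    (p.insertNth a w : Fin (m + 1) → α) ⟨i, hi⟩ =
      if h : i < p then w ⟨i, by omega⟩
      else if h' : i = p then a else w ⟨i - 1, by omega⟩ := by
  split_ifs with h h'
  · simp [Fin.insertNth_apply_below (show (⟨i, hi⟩ : Fin (m + 1)) < p from h)]; rfl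
  · obtain rfl : (⟨i, hi⟩ : Fin (m + 1)) = p := Fin.ext h'
    simp
  · have : p < ⟨i, hi⟩ := by rw [Fin.lt_def]; dsimp only; omega
    simp [Fin.insertNth_apply_above this]; rfl

/-- The entry before position `i` in the word `0 w₀ w₁ ⋯ w_{m-1}`. -/
def prevVal {m : ℕ} (w : Fin m → ℤ) (i : Fin m) : ℤ :=
  if (i : ℕ) = 0 then 0 else w ⟨(i : ℕ) - 1, lt_of_le_of_lt (Nat.sub_le _ _) i.2⟩

def descentCount {m : ℕ} (w : Fin m → ℤ) : ℕ :=
  #{i | w i < prevVal w i}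

theorem desB_eq_descentCount (n : ℕ) (σ : Equiv.Perm (Fin n)) (ε : Fin n → Bool) :
    desB n σ ε = descentCount (signedVal n σ ε) := by
  unfold desB descentCount prevVal
  simp only [gt_iff_lt, dite_eq_ite]
  congr
  ext i
  split_ifs <;> rfl

section Insertion

variable {m : ℕ}

theorem prevVal_insertNth_succAbove (p : Fin (m + 1)) (a : ℤ) (w : Fin m → ℤ) (j : Fin m) :
    prevVal (p.insertNth a w) (p.succAbove j) = if p = j.castSucc then a else prevVal w j := by
  rcases Fin.lt_or_le j.castSucc p with h | h
  · rw [Fin.succAbove_of_castSucc_lt _ _ h, if_neg h.ne']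
    rw [Fin.lt_def, Fin.val_castSucc] at h
    unfold prevVal
    simp only [Fin.val_castSucc]
    split_ifs
    · rfl
    · rw [Fin.insertNth_apply_mk, dif_pos (by omega)]
  · rw [Fin.succAbove_of_le_castSucc _ _ h]
    rw [Fin.le_def, Fin.val_castSucc] at h
    unfold prevVal
    simp only [Fin.val_succ, Nat.add_sub_cancel, Nat.add_one_ne_zero, if_false, Fin.ext_iff,
      Fin.val_castSucc, Fin.insertNth_apply_mk]
    rcases h.eq_or_lt with h | h
    · simp [h]
    · rw [dif_neg (by omega), dif_neg (by omega), if_neg (by omega), if_neg (by omega)]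

theorem prevVal_insertNth_self (p : Fin (m + 1)) (a : ℤ) (w : Fin m → ℤ) :
    prevVal (p.insertNth a w) p = 0 ∨ ∃ j, prevVal (p.insertNth a w) p = w j := by
  unfold prevVal
  split_ifs with h
  · exact .inl rfl
  · rw [Fin.insertNth_apply_mk, dif_pos (by omega)]
    exact .inr ⟨_, rfl⟩

variable {a : ℤ} {w : Fin m → ℤ}

theorem insertNth_lt_prevVal_self_iff (p : Fin (m + 1)) (h : ∀ j, |w j| < |a|) :
    (p.insertNth a w : Fin (m + 1) → ℤ) p < prevVal (p.insertNth a w) p ↔ a < 0 := by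
  rw [Fin.insertNth_apply_same]
  rcases prevVal_insertNth_self p a w with h0 | ⟨j, hj⟩
  · rw [h0]
  · have := h j
    rw [hj]
    constructor <;> intro <;> cases abs_cases a <;> cases abs_cases (w j) <;> linarith

theorem descentCount_insertNth (p : Fin (m + 1)) (h : ∀ j, |w j| < |a|) :
    descentCount (p.insertNth a w) = (if a < 0 then 1 else 0) +
      ∑ j, if p = j.castSucc then (if w j < a then 1 else 0)
        else (if w j < prevVal w j then 1 else 0) := by
  rw [descentCount, card_filter, Fin.sum_univ_succAbove _ p,
    if_congr (insertNth_lt_prevVal_self_iff p h) rfl rfl]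
  congr 1
  refine sum_congr rfl fun j _ => ?_
  rw [Fin.insertNth_apply_succAbove, prevVal_insertNth_succAbove]
  split_ifs <;> rfl

theorem descentCount_insertNth_last (h : ∀ j, |w j| < |a|) :
    descentCount ((Fin.last m).insertNth a w) = descentCount w + if a < 0 then 1 else 0 := by
  rw [descentCount_insertNth _ h, descentCount, card_filter, add_comm]
  simp only [(Fin.castSucc_lt_last _).ne', if_false]

theorem descentCount_insertNth_castSucc (q : Fin m) (h : ∀ j, |w j| < |a|) :
    descentCount (q.castSucc.insertNth a w) =
      if w q < prevVal w q then descentCount w else descentCount w + 1 := by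
  -- `a` creates exactly one descent: at its own position if `a < 0`, just after it if `a > 0`.
  have hnew : (if a < 0 then 1 else 0) + (if w q < a then 1 else 0) = 1 := by
    have := h q
    cases abs_cases a <;> cases abs_cases (w q) <;> split_ifs <;> omega
  rw [descentCount_insertNth _ h, descentCount, card_filter, Fintype.sum_eq_add_sum_compl q,
    Fintype.sum_eq_add_sum_compl q]
  simp only [Fin.castSucc_inj, if_true]
  rw [← add_assoc, hnew, sum_congr rfl fun j hj => if_neg (by simpa [eq_comm] using hj)]
  split_ifs <;> omega

end Insertion

def insertPerm {m : ℕ} (p : Fin (m + 1)) (σ : Equiv.Perm (Fin m)) : Equiv.Perm (Fin (m + 1)) :=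
  (finSuccEquiv' p).trans ((Equiv.optionCongr σ).trans finSuccEquivLast.symm)

@[simp] theorem insertPerm_apply_self {m : ℕ} (p : Fin (m + 1)) (σ : Equiv.Perm (Fin m)) :
    insertPerm p σ p = Fin.last m := by
  simp [insertPerm]

@[simp] theorem insertPerm_apply_succAbove {m : ℕ} (p : Fin (m + 1)) (σ : Equiv.Perm (Fin m))
    (j : Fin m) : insertPerm p σ (p.succAbove j) = (σ j).castSucc := by
  simp [insertPerm]

theorem signedVal_insert {m : ℕ} (p : Fin (m + 1)) (s : Bool) (σ : Equiv.Perm (Fin m))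
    (ε : Fin m → Bool) :
    signedVal (m + 1) (insertPerm p σ) (p.insertNth s ε) =
      p.insertNth (if s then -((m : ℤ) + 1) else (m : ℤ) + 1) (signedVal m σ ε) := by
  funext i
  cases i using Fin.succAboveCases p <;> simp [signedVal]

theorem abs_signedVal {n : ℕ} (σ : Equiv.Perm (Fin n)) (ε : Fin n → Bool) (i : Fin n) :
    |signedVal n σ ε i| = (σ i : ℤ) + 1 := by
  unfold signedVal
  split_ifs <;> simp only [abs_neg, abs_eq_self] <;> positivity

theorem abs_signedVal_lt {n : ℕ} (σ : Equiv.Perm (Fin n)) (ε : Fin n → Bool) (i : Fin n) :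
    |signedVal n σ ε i| < n + 1 := by
  have := (σ i).2
  rw [abs_signedVal]
  omega

theorem insertPerm_insertNth_bijective (m : ℕ) :
    Function.Bijective fun z : (Equiv.Perm (Fin m) × (Fin m → Bool)) × (Fin (m + 1) × Bool) =>
      (insertPerm z.2.1 z.1.1, (z.2.1.insertNth z.2.2 z.1.2 : Fin (m + 1) → Bool)) := by
  rw [Fintype.bijective_iff_injective_and_card]
  refine ⟨?_, by simp [Fintype.card_perm, Nat.factorial_succ, pow_succ]; ring⟩
  rintro ⟨⟨σ, ε⟩, ⟨p, s⟩⟩ ⟨⟨σ', ε'⟩, ⟨p', s'⟩⟩ h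
  obtain ⟨hσ, hε⟩ := Prod.mk.inj h
  obtain rfl : p = p' := (insertPerm p' σ').injective <|
    (hσ ▸ insertPerm_apply_self p σ).trans (insertPerm_apply_self p' σ').symm
  obtain ⟨rfl, rfl⟩ := Fin.insertNth_injective2 hε
  obtain rfl : σ = σ' := Equiv.ext fun j => Fin.castSucc_injective m <| by
    rw [← insertPerm_apply_succAbove p, ← insertPerm_apply_succAbove p, hσ]
  rfl

theorem sum_signedPerm_succ {M : Type*} [AddCommMonoid M] (m : ℕ)
    (f : Equiv.Perm (Fin (m + 1)) → (Fin (m + 1) → Bool) → M) :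
    ∑ σ, ∑ ε, f σ ε =
      ∑ σ, ∑ ε, ∑ p, ∑ s, f (insertPerm p σ) (p.insertNth s ε) := by
  have := (insertPerm_insertNth_bijective m).sum_comp fun z => f z.1 z.2
  simp only [Fintype.sum_prod_type] at this
  exact this.symm

open Polynomial

noncomputable def eulerianB (R : Type*) [CommSemiring R] (n : ℕ) : R[X] :=
  ∑ σ : Equiv.Perm (Fin n), ∑ ε : Fin n → Bool, X ^ desB n σ ε

noncomputable def eulerianBStep (R : Type*) [CommRing R] (m : ℕ) : R[X] →ₗ[R] R[X] :=
  LinearMap.mulLeft R (1 + (2 * (m : R[X]) + 1) * X) +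
    LinearMap.mulLeft R (2 * X * (1 - X)) ∘ₗ derivative

theorem eulerianBStep_apply {R : Type*} [CommRing R] (m : ℕ) (f : R[X]) :
    eulerianBStep R m f = (1 + (2 * (m : R[X]) + 1) * X) * f + 2 * X * (1 - X) * derivative f :=
  rfl

theorem X_mul_derivative_X_pow {R : Type*} [CommSemiring R] (n : ℕ) :
    X * derivative (X ^ n : R[X]) = (n : R[X]) * X ^ n := by
  rcases n with _ | n
  · simp
  · rw [derivative_X_pow, C_eq_natCast, Nat.add_sub_cancel]; ring

theorem eulerianBStep_X_pow {R : Type*} [CommRing R] {d e m : ℕ} (h : d + e = m) :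
    eulerianBStep R m (X ^ d) =
      (2 * (d : R[X]) + 1) * X ^ d + (2 * (e : R[X]) + 1) * X ^ (d + 1) := by
  subst h
  rw [eulerianBStep_apply]
  push_cast
  linear_combination (2 * (1 - X)) * X_mul_derivative_X_pow (R := R) d

theorem sum_X_pow_descentCount_insertNth (R : Type*) [CommRing R] {m : ℕ} {a : ℤ}
    {w : Fin m → ℤ} (ha : 0 < a) (h : ∀ j, |w j| < a) :
    ∑ p : Fin (m + 1), ∑ s : Bool,
        (X : R[X]) ^ descentCount (p.insertNth (if s then -a else a) w) =
      eulerianBStep R m (X ^ descentCount w) := by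
  have hpos : ∀ j, |w j| < |a| := fun j => (h j).trans_le (le_abs_self a)
  have hneg : ∀ j, |w j| < |-a| := by simpa only [abs_neg] using hpos
  have hcard : descentCount w + #{i | ¬w i < prevVal w i} = m := by
    rw [descentCount, card_filter_add_card_filter_not, card_univ, Fintype.card_fin]
  simp only [Fin.sum_univ_castSucc, Fintype.sum_bool, if_true, Bool.false_eq_true, if_false,
    descentCount_insertNth_castSucc _ hpos, descentCount_insertNth_castSucc _ hneg,
    descentCount_insertNth_last hpos, descentCount_insertNth_last hneg]
  rw [if_pos (by omega), if_neg (by omega), eulerianBStep_X_pow hcard]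
  simp only [← two_mul, ← mul_sum, apply_ite (X ^ ·), sum_ite, sum_const, nsmul_eq_mul,
    add_zero]
  unfold descentCount
  ring

theorem sum_insert_X_pow_desB (R : Type*) [CommRing R] {m : ℕ} (σ : Equiv.Perm (Fin m))
    (ε : Fin m → Bool) :
    ∑ p, ∑ s, (X : R[X]) ^ desB (m + 1) (insertPerm p σ) (p.insertNth s ε) =
      eulerianBStep R m (X ^ desB m σ ε) := by
  simp only [desB_eq_descentCount, signedVal_insert]
  exact sum_X_pow_descentCount_insertNth R (by positivity) (abs_signedVal_lt σ ε)

theorem eulerianB_succ (R : Type*) [CommRing R] (m : ℕ) :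
    eulerianB R (m + 1) = eulerianBStep R m (eulerianB R m) := by
  simp only [eulerianB, sum_signedPerm_succ m, sum_insert_X_pow_desB, map_sum]

theorem eulerianB_one (R : Type*) [CommRing R] : eulerianB R 1 = 1 + X := by
  have h0 : eulerianB R 0 = X ^ 0 := by simp [eulerianB, desB]
  rw [eulerianB_succ, h0, eulerianBStep_X_pow (zero_add 0)]
  simp

noncomputable def gammaTerm (R : Type*) [CommRing R] (n k : ℕ) : R[X] :=
  X ^ k * (1 + X) ^ (n - 2 * k)

theorem eulerianBStep_gammaTerm (R : Type*) [CommRing R] {m k : ℕ} (hk : 2 * k ≤ m) :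
    eulerianBStep R m (gammaTerm R m k) =
      (2 * (k : R[X]) + 1) * gammaTerm R (m + 1) k +
        4 * ((m - 2 * k : ℕ) : R[X]) * gammaTerm R (m + 1) (k + 1) := by
  obtain ⟨j, rfl⟩ := Nat.exists_eq_add_of_le hk
  have hX := X_mul_derivative_X_pow (R := R) k
  rw [gammaTerm, gammaTerm, gammaTerm, eulerianBStep_apply, derivative_mul,
    show 2 * k + j + 1 - 2 * k = j + 1 by omega, Nat.add_sub_cancel_left]
  rcases j with _ | j
  · simp only [pow_zero, derivative_one, mul_zero, add_zero, mul_one]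
    push_cast
    linear_combination (2 * (1 - X)) * hX
  · rw [show 2 * k + (j + 1) + 1 - 2 * (k + 1) = j by omega, derivative_pow_succ]
    simp only [derivative_one, derivative_X, zero_add, mul_one, map_add, map_one, map_natCast]
    push_cast
    linear_combination (2 * (1 - X) * (1 + X) ^ (j + 1)) * hX

noncomputable def gammaPoly {R : Type*} [CommRing R] (b : ℕ → ℤ → R) (n : ℕ) : R[X] :=
  ∑ k ∈ range (n / 2 + 1), C (b n k) * gammaTerm R n k

def GammaBRecurrence {R : Type*} [CommRing R] (b : ℕ → ℤ → R) : Prop :=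
  ∀ n : ℕ, 2 ≤ n → ∀ k : ℤ,
    b n k = (2 * k + 1) * b (n - 1) k + 4 * (n + 1 - 2 * k) * b (n - 1) (k - 1)

namespace GammaBRecurrence

variable {R : Type*} [CommRing R] {b : ℕ → ℤ → R}

theorem eq_zero (hbrec : GammaBRecurrence b) (hb1' : ∀ k : ℤ, k ≠ 0 → b 1 k = 0) {n : ℕ}
    (hn : 1 ≤ n) {k : ℤ} (hk : k < 0 ∨ n < 2 * k) : b n k = 0 := by
  induction n, hn using Nat.le_induction generalizing k with
  | base => exact hb1' k (by omega)
  | succ m hm ih =>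
    rw [hbrec (m + 1) (by omega), Nat.add_sub_cancel, ih (by omega)]
    rcases hk with hk | hk
    · rw [ih (by omega)]; ring
    · by_cases h : (m : ℤ) < 2 * (k - 1)
      · rw [ih (.inr h)]; ring
      · have : ((m + 1 : ℕ) : R) + 1 - 2 * k = 0 := by
          have h2 : ((2 * k : ℤ) : R) = ((m + 2 : ℤ) : R) := congrArg _ (by omega)
          push_cast at h2 ⊢
          linear_combination -h2
        rw [this]; ring

theorem gammaPoly_eq_sum_range (hbrec : GammaBRecurrence b)
    (hb1' : ∀ k : ℤ, k ≠ 0 → b 1 k = 0) {n N : ℕ} (hn : 1 ≤ n) (hN : n / 2 + 1 ≤ N) :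
    gammaPoly b n = ∑ k ∈ range N, C (b n k) * gammaTerm R n k := by
  refine sum_subset (range_subset_range.mpr hN) fun k _ hk => ?_
  rw [hbrec.eq_zero hb1' hn (.inr (by simp at hk; omega)), map_zero, zero_mul]

theorem gammaPoly_succ (hbrec : GammaBRecurrence b) (hb1' : ∀ k : ℤ, k ≠ 0 → b 1 k = 0)
    {m : ℕ} (hm : 1 ≤ m) :
    gammaPoly b (m + 1) = eulerianBStep R m (gammaPoly b m) := by
  have hterm : ∀ k ∈ range (m / 2 + 1), eulerianBStep R m (C (b m k) * gammaTerm R m k) =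
      C (b m k) * ((2 * (k : R[X]) + 1) * gammaTerm R (m + 1) k) +
        C (b m k) * (4 * ((m - 2 * k : ℕ) : R[X]) * gammaTerm R (m + 1) (k + 1)) := fun k hk => by
    rw [← smul_eq_C_mul, map_smul, smul_eq_C_mul,
      eulerianBStep_gammaTerm R (by simp at hk; omega), mul_add]
  have hcoef : ∀ k : ℕ, C (b (m + 1) k) = (2 * (k : R[X]) + 1) * C (b m k) +
      4 * ((m : R[X]) + 2 - 2 * k) * C (b m (k - 1)) := fun k => by
    rw [hbrec (m + 1) (by omega), Nat.add_sub_cancel]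
    simp only [map_add, map_mul, map_sub, map_ofNat, map_one, map_intCast, map_natCast]
    push_cast
    ring
  rw [hbrec.gammaPoly_eq_sum_range hb1' (by omega)
      (show (m + 1) / 2 + 1 ≤ m / 2 + 1 + 1 by omega),
    gammaPoly, map_sum, sum_congr rfl hterm, sum_add_distrib,
    sum_congr rfl fun k _ => by rw [hcoef, add_mul], sum_add_distrib]
  congr 1
  · rw [sum_range_succ, hbrec.eq_zero hb1' hm (.inr (by omega)), map_zero, mul_zero, zero_mul,
      add_zero]
    exact sum_congr rfl fun k _ => by ring
  · rw [sum_range_succ', hbrec.eq_zero hb1' hm (k := ((0 : ℕ) : ℤ) - 1) (.inl (by omega)),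
      map_zero, mul_zero, zero_mul, add_zero]
    refine sum_congr rfl fun k hk => ?_
    rw [Nat.cast_sub (by simp at hk; omega), show ((k + 1 : ℕ) : ℤ) - 1 = k by push_cast; ring]
    push_cast
    ring

end GammaBRecurrence

theorem gammaPoly_one {R : Type*} [CommRing R] {b : ℕ → ℤ → R} (hb1 : b 1 0 = 1) :
    gammaPoly b 1 = 1 + X := by
  simp [gammaPoly, gammaTerm, hb1]

theorem eulerianB_eq_gammaPoly {R : Type*} [CommRing R] {b : ℕ → ℤ → R}
    (hb1 : b 1 0 = 1) (hb1' : ∀ k : ℤ, k ≠ 0 → b 1 k = 0) (hbrec : GammaBRecurrence b)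
    {n : ℕ} (hn : 1 ≤ n) : eulerianB R n = gammaPoly b n := by
  induction n, hn using Nat.le_induction with
  | base => rw [eulerianB_one, gammaPoly_one hb1]
  | succ m hm ih => rw [eulerianB_succ, ih, hbrec.gammaPoly_succ hb1' hm]

/-- The gamma-expansion of the type `B` Eulerian polynomial
`B_n(x) = Σ_{π ∈ B_n} x^{des_B(π)} = Σ_{k=0}^{⌊n/2⌋} b(n,k) x^k (1+x)^{n−2k}`,
where `b(1,0)=1`, `b(1,k)=0` for `k ≥ 1` (and `b(n,k)=0` for `k < 0`), and
`b(n,k) = (2k+1)b(n−1,k) + 4(n+1−2k)b(n−1,k−1)` for `n ≥ 2`. -/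
theorem eulerianB_gamma_expansion (b : ℕ → ℤ → ℝ)
    (hb1 : b 1 0 = 1) (hb1' : ∀ k : ℤ, k ≠ 0 → b 1 k = 0)
    (hbrec : ∀ n : ℕ, 2 ≤ n → ∀ k : ℤ,
      b n k = (2 * k + 1) * b (n - 1) k + 4 * (n + 1 - 2 * k) * b (n - 1) (k - 1)) :
    ∀ n : ℕ, 1 ≤ n → ∀ x : ℝ,
      (∑ σ : Equiv.Perm (Fin n), ∑ ε : Fin n → Bool, x ^ desB n σ ε) =
        ∑ k ∈ Finset.range (n / 2 + 1),
          b n k * x ^ k * (1 + x) ^ (n - 2 * k) := by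
  intro n hn x
  have := congrArg (eval x) (eulerianB_eq_gammaPoly hb1 hb1' hbrec hn)
  simpa [eulerianB, gammaPoly, gammaTerm, eval_finsetSum, mul_assoc] using this
end

section
/- For all n ≥ 1, the Narayana polynomial identity holds: (1/n) Σ_{k=0}^{n−1} C(n,k) C(n,k+1) x^k = Σ_{k=0}^{⌊(n−1)/2⌋} C_k C(n−1,2k) x^k (1+x)^{n−1−2k}, where C_k = C(2k,k)/(k+1) is the k-th Catalan number. -/
open Finset

namespace NarayanaAux
open Nat

lemma term_id (p q k : ℕ) (hkp : k ≤ p) :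
    ((q : ℝ) + 1) * ((catalan k : ℝ) * ((p+q).choose (2*k)) * ((p+q-2*k).choose (p-k)))
      = (p.choose k : ℝ) * ((q+1).choose (k+1)) * ((p+q).choose p) := by
  rcases le_or_gt k q with hkq | hkq
  · have hc : ((k:ℝ)+1) * catalan k = (2*k).choose k := by
      have h2 : (k+1) * catalan k = (2*k).choose k := succ_mul_catalan_eq_centralBinom k
      exact_mod_cast congrArg (Nat.cast (R := ℝ)) h2
    have key : ((k:ℝ)+1) * (((q : ℝ) + 1) * ((catalan k : ℝ) * ((p+q).choose (2*k)) * ((p+q-2*k).choose (p-k))))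
        = ((k:ℝ)+1) * ((p.choose k : ℝ) * ((q+1).choose (k+1)) * ((p+q).choose p)) := by
      have e1 : 2*k - k = k := by omega
      have e3 : p+q-2*k - (p-k) = q-k := by omega
      have e5 : q+1 - (k+1) = q-k := by omega
      have e6 : p+q - p = q := by omega
      have h1 : (((2*k).choose k : ℕ) : ℝ) = (2*k)! / (k ! * k !) := by
        rw [Nat.cast_choose ℝ (by omega), e1]
      have h2 : (((p+q).choose (2*k) : ℕ) : ℝ) = (p+q)! / ((2*k)! * (p+q-2*k)!) :=
        Nat.cast_choose ℝ (by omega)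
      have h3 : (((p+q-2*k).choose (p-k) : ℕ) : ℝ) = (p+q-2*k)! / ((p-k)! * (q-k)!) := by
        rw [Nat.cast_choose ℝ (by omega), e3]
      have h4 : ((p.choose k : ℕ) : ℝ) = p ! / (k ! * (p-k)!) := Nat.cast_choose ℝ hkp
      have h5 : (((q+1).choose (k+1) : ℕ) : ℝ) = (q+1)! / ((k+1)! * (q-k)!) := by
        rw [Nat.cast_choose ℝ (by omega), e5]
      have h6 : (((p+q).choose p : ℕ) : ℝ) = (p+q)! / (p ! * q !) := by
        rw [Nat.cast_choose ℝ (by omega), e6]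
      have hcat : (catalan k : ℝ) = (2*k)! / (k ! * k !) / ((k:ℝ)+1) := by
        rw [eq_div_iff (by positivity), mul_comm, hc, h1]
      rw [hcat, h2, h3, h4, h5, h6]
      have hq1 : ((q+1)! : ℝ) = ((q:ℝ)+1) * q ! := by
        rw [Nat.factorial_succ]; push_cast; ring
      have hk1 : ((k+1)! : ℝ) = ((k:ℝ)+1) * k ! := by
        rw [Nat.factorial_succ]; push_cast; ring
      rw [hq1, hk1]
      have f1 : (k ! : ℝ) ≠ 0 := by positivity
      have f2 : ((2*k)! : ℝ) ≠ 0 := by positivity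
      have f3 : ((p+q-2*k)! : ℝ) ≠ 0 := by positivity
      have f4 : ((p-k)! : ℝ) ≠ 0 := by positivity
      have f5 : ((q-k)! : ℝ) ≠ 0 := by positivity
      have f6 : (p ! : ℝ) ≠ 0 := by positivity
      have f7 : (q ! : ℝ) ≠ 0 := by positivity
      have f8 : ((k:ℝ)+1) ≠ 0 := by positivity
      field_simp
    exact mul_left_cancel₀ (by positivity : ((k:ℝ)+1) ≠ 0) key
  · have hr : (q+1).choose (k+1) = 0 := Nat.choose_eq_zero_of_lt (by omega)
    rcases le_or_gt (2*k) (p+q) with h2k | h2k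
    · have h0 : (p+q-2*k).choose (p-k) = 0 := Nat.choose_eq_zero_of_lt (by omega)
      rw [h0, hr]; push_cast; ring
    · have h0 : (p+q).choose (2*k) = 0 := Nat.choose_eq_zero_of_lt (by omega)
      rw [h0, hr]; push_cast; ring

lemma vand (p q : ℕ) :
    ∑ k ∈ range (p+1), p.choose k * (q+1).choose (k+1) = (p+q+1).choose (p+1) := by
  have h := Nat.add_choose_eq p (q+1) (p+1)
  rw [Finset.Nat.sum_antidiagonal_eq_sum_range_succ_mk] at h
  rw [Finset.sum_range_succ] at h
  simp only [Nat.choose_succ_self, zero_mul, add_zero] at h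
  have h2 : ∑ i ∈ range (p+1), p.choose i * (q+1).choose (p+1-i)
      = ∑ k ∈ range (p+1), p.choose k * (q+1).choose (k+1) := by
    rw [← Finset.sum_range_reflect]
    apply Finset.sum_congr rfl
    intro k hk
    have hkp : k ≤ p := Nat.lt_succ_iff.mp (Finset.mem_range.mp hk)
    have e1 : p + 1 - 1 - k = p - k := by omega
    have e2 : p + 1 - (p - k) = k + 1 := by omega
    rw [e1, e2, Nat.choose_symm hkp]
  rw [← h2, ← h, Nat.add_assoc]

lemma coeff_id (n j : ℕ) (hn : 1 ≤ n) (hj : j < n) :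
    (n : ℝ) * ∑ k ∈ range (j+1),
        (catalan k : ℝ) * ((n-1).choose (2*k)) * ((n-1-2*k).choose (j-k))
      = (n.choose j : ℝ) * (n.choose (j+1)) := by
  obtain ⟨q, rfl⟩ : ∃ q, n = j + q + 1 := ⟨n - j - 1, by omega⟩
  set p := j
  have e1 : p + q + 1 - 1 = p + q := by omega
  rw [e1]
  have hsum : ((q:ℝ)+1) * ∑ k ∈ range (p+1),
      (catalan k : ℝ) * ((p+q).choose (2*k)) * ((p+q-2*k).choose (p-k))
      = ((p+q+1).choose (p+1) : ℝ) * ((p+q).choose p) := by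
    rw [Finset.mul_sum]
    rw [Finset.sum_congr rfl (fun k hk => term_id p q k (Nat.lt_succ_iff.mp (Finset.mem_range.mp hk)))]
    rw [← Finset.sum_mul]
    norm_cast
    rw [vand]
  -- now derive the goal
  have hmul : ((p:ℝ)+q+1) * ((p+q).choose p) = ((q:ℝ)+1) * ((p+q+1).choose p) := by
    have h1 : (p+q+1) * (p+q).choose q = (p+q+1).choose (q+1) * (q+1) :=
      Nat.add_one_mul_choose_eq (p+q) q
    have h2 : (p+q).choose q = (p+q).choose p := by
      rw [← Nat.choose_symm (by omega : q ≤ p+q)]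
      congr 1; omega
    have h3 : (p+q+1).choose (q+1) = (p+q+1).choose p := by
      rw [← Nat.choose_symm (by omega : q+1 ≤ p+q+1)]
      congr 1; omega
    rw [h2, h3] at h1
    have := congrArg (Nat.cast (R := ℝ)) h1
    push_cast at this
    linarith
  have hq : ((q:ℝ)+1) ≠ 0 := by positivity
  apply mul_left_cancel₀ hq
  push_cast at hsum hmul ⊢
  linear_combination ((p:ℝ)+q+1) * hsum + ((p+q+1).choose (p+1) : ℝ) * hmul

lemma tri (f : ℕ → ℕ → ℝ) (n : ℕ) :
    ∑ j ∈ range n, ∑ k ∈ range (j+1), f k (j-k)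
      = ∑ k ∈ range n, ∑ i ∈ range (n-k), f k i := by
  induction n with
  | zero => simp
  | succ n ih =>
    rw [Finset.sum_range_succ, ih]
    have h1 : ∑ k ∈ range (n+1), ∑ i ∈ range (n+1-k), f k i
        = ∑ k ∈ range (n+1), ((∑ i ∈ range (n-k), f k i) + f k (n-k)) := by
      refine Finset.sum_congr rfl fun k hk => ?_
      have : n+1-k = (n-k)+1 := by
        have := Finset.mem_range.mp hk; omega
      rw [this, Finset.sum_range_succ]
    rw [h1, Finset.sum_add_distrib, Finset.sum_range_succ (fun k => ∑ i ∈ range (n-k), f k i)]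
    simp

end NarayanaAux

open NarayanaAux Nat in
/-- Gamma-expansion of the `h`-polynomial of the type `A` associahedron
(the Narayana polynomial): for `n ≥ 1`,
`(1/n) Σ_{k=0}^{n−1} C(n,k)C(n,k+1) x^k
  = Σ_{k=0}^{⌊(n−1)/2⌋} C_k C(n−1,2k) x^k (1+x)^{n−1−2k}`,
where `C_k` is the `k`-th Catalan number. -/

theorem narayana_gamma_expansion (n : ℕ) (hn : 1 ≤ n) (x : ℝ) :
    (1 / (n : ℝ)) * ∑ k ∈ Finset.range n, (n.choose k : ℝ) * (n.choose (k + 1)) * x ^ k =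
      ∑ k ∈ Finset.range ((n - 1) / 2 + 1),
        (catalan k : ℝ) * ((n - 1).choose (2 * k)) * x ^ k * (1 + x) ^ (n - 1 - 2 * k) := by
  set m := n - 1 with hm
  set G : ℕ → ℕ → ℝ := fun k i =>
    (catalan k : ℝ) * (m.choose (2*k)) * ((m-2*k).choose i) * x^(k+i) with hG
  -- Step A: extend the k-range to n
  have stepA : ∑ k ∈ range (m/2 + 1),
        (catalan k : ℝ) * (m.choose (2*k)) * x^k * (1+x)^(m-2*k)
      = ∑ k ∈ range n, (catalan k : ℝ) * (m.choose (2*k)) * x^k * (1+x)^(m-2*k) := by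
    apply Finset.sum_subset
    · intro a ha
      rw [Finset.mem_range] at *
      omega
    · intro a ha ha'
      rw [Finset.mem_range] at ha ha'
      have : m.choose (2*a) = 0 := Nat.choose_eq_zero_of_lt (by omega)
      rw [this]
      push_cast
      ring
  -- Step B: binomial expansion
  have stepB : ∀ k < n, (1+x)^(m-2*k) = ∑ i ∈ range n, (((m-2*k).choose i : ℕ) : ℝ) * x^i := by
    intro k hk
    rw [add_comm 1 x, add_pow]
    rw [show (∑ i ∈ range (m-2*k+1), x^i * 1^(m-2*k-i) * ((m-2*k).choose i : ℕ))
        = ∑ i ∈ range (m-2*k+1), (((m-2*k).choose i : ℕ) : ℝ) * x^i from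
      Finset.sum_congr rfl fun i _ => by ring]
    apply Finset.sum_subset
    · intro a ha
      rw [Finset.mem_range] at *
      omega
    · intro a ha ha'
      rw [Finset.mem_range] at ha ha'
      rw [Nat.choose_eq_zero_of_lt (by omega)]
      push_cast
      ring
  -- Step C: RHS as double sum of G
  have stepC : ∑ k ∈ range n, (catalan k : ℝ) * (m.choose (2*k)) * x^k * (1+x)^(m-2*k)
      = ∑ k ∈ range n, ∑ i ∈ range n, G k i := by
    refine Finset.sum_congr rfl fun k hk => ?_
    rw [stepB k (Finset.mem_range.mp hk), Finset.mul_sum]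
    refine Finset.sum_congr rfl fun i _ => ?_
    rw [hG]
    simp only []
    rw [pow_add]
    ring
  -- Step D: shrink inner range and apply tri
  have stepD : ∑ k ∈ range n, ∑ i ∈ range n, G k i
      = ∑ j ∈ range n, ∑ k ∈ range (j+1), G k (j-k) := by
    rw [tri]
    refine Finset.sum_congr rfl fun k hk => ?_
    symm
    apply Finset.sum_subset
    · intro a ha
      rw [Finset.mem_range] at *
      omega
    · intro a ha ha'
      rw [Finset.mem_range] at ha ha'
      rw [hG]
      simp only []
      rcases le_or_gt (2*k) m with h2 | h2
      · rw [Nat.choose_eq_zero_of_lt (show m - 2*k < a by omega)]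
        ring
      · rw [Nat.choose_eq_zero_of_lt (show m < 2*k by omega)]
        ring
  -- Step E: conclude
  rw [stepA, stepC, stepD, Finset.mul_sum]
  refine Finset.sum_congr rfl fun j hj => ?_
  have hjn := Finset.mem_range.mp hj
  have hsum : ∑ k ∈ range (j+1), G k (j-k)
      = (∑ k ∈ range (j+1),
          (catalan k : ℝ) * (m.choose (2*k)) * ((m-2*k).choose (j-k))) * x^j := by
    rw [Finset.sum_mul]
    refine Finset.sum_congr rfl fun k hk => ?_
    have hkj : k ≤ j := Nat.lt_succ_iff.mp (Finset.mem_range.mp hk)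
    rw [hG]
    simp only []
    rw [show k + (j - k) = j from by omega]
  rw [hsum]
  have hc := coeff_id n j hn hjn
  rw [hm] at *
  have hn0 : (n : ℝ) ≠ 0 := by positivity
  field_simp
  rw [mul_comm ((n.choose j : ℝ) * (n.choose (j+1))) (x^j), ← hc]
  ring
end

section
/- For all n ≥ 1, the identity Σ_{k=0}^{n} C(n,k)^2 x^k = Σ_{k=0}^{⌊n/2⌋} C(2k,k) C(n,2k) x^k (1+x)^{n−2k} holds as an identity of polynomials in x. -/
/-!
Expand `C(n,m)² = Σ_k C(n,m) C(m,k) C(n-m,k)` by Vandermonde's identity and swap the two sums.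
The summand is a multinomial coefficient, `C(n,2k) C(2k,k) C(n-2k,m-k)`: choose `2k` elements,
split them into two halves, then choose `m-k` of the remaining `n-2k`. It vanishes for `2k > n`,
and for fixed `k ≤ n/2` the binomial theorem sums it over `m` to `C(2k,k) C(n,2k) x^k (1+x)^(n-2k)`.
-/

open Finset

namespace Nat

lemma choose_mul_choose_sub_comm (n j k : ℕ) :
    n.choose j * (n - j).choose k = n.choose k * (n - k).choose j := by
  have hj := choose_mul (n := n) (le_add_right j k)
  have hk := choose_mul (n := n) (le_add_left k j)
  rw [Nat.add_sub_cancel_left] at hj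
  rw [Nat.add_sub_cancel] at hk
  rw [← hj, ← hk, choose_symm_add]

lemma choose_mul_choose_mul_choose_sub {n m k : ℕ} (hkm : k ≤ m) :
    n.choose m * m.choose k * (n - m).choose k =
      n.choose (2 * k) * (2 * k).choose k * (n - 2 * k).choose (m - k) := by
  calc n.choose m * m.choose k * (n - m).choose k
      = n.choose k * ((n - k).choose (m - k) * (n - k - (m - k)).choose k) := by
        rw [choose_mul hkm, show n - k - (m - k) = n - m by omega, mul_assoc]
    _ = n.choose k * ((n - k).choose k * (n - k - k).choose (m - k)) := by
        rw [choose_mul_choose_sub_comm]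
    _ = n.choose (2 * k) * (2 * k).choose k * (n - 2 * k).choose (m - k) := by
        rw [choose_mul (show k ≤ 2 * k by omega), show 2 * k - k = k by omega,
          show n - k - k = n - 2 * k by omega, mul_assoc]

lemma choose_mul_choose_mul_choose_sub_eq_zero {n m k : ℕ} (hnk : n < 2 * k) :
    n.choose m * m.choose k * (n - m).choose k = 0 := by
  rcases lt_or_ge m k with hmk | hkm
  · rw [choose_eq_zero_of_lt hmk, mul_zero, zero_mul]
  · rw [choose_eq_zero_of_lt (show n - m < k by omega), mul_zero]

lemma choose_eq_sum_range_choose_mul_choose_sub {n m : ℕ} (hmn : m ≤ n) :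
    n.choose m = ∑ k ∈ range (n + 1), m.choose k * (n - m).choose k := by
  obtain ⟨r, rfl⟩ := exists_add_of_le hmn
  calc (m + r).choose m
      = ∑ ij ∈ antidiagonal m, m.choose ij.2 * r.choose ij.2 := by
        rw [add_choose_eq]
        refine sum_congr rfl fun ij hij => ?_
        rw [choose_symm_of_eq_add (mem_antidiagonal.1 hij).symm]
    _ = ∑ k ∈ range (m + 1), m.choose k * r.choose k := by
        rw [← Finset.Nat.sum_antidiagonal_swap]
        exact Finset.Nat.sum_antidiagonal_eq_sum_range_succ_mk
          (fun ij => m.choose ij.1 * r.choose ij.1) m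
    _ = ∑ k ∈ range (m + r + 1), m.choose k * (m + r - m).choose k := by
        rw [Nat.add_sub_cancel_left]
        refine sum_subset (range_subset_range.2 (by omega)) fun k _ hk => ?_
        rw [choose_eq_zero_of_lt (by simpa using hk), zero_mul]

end Nat

open Nat in
lemma sum_range_choose_mul_choose_mul_choose_sub_mul_pow {R : Type*} [CommSemiring R] {n k : ℕ}
    (hk : 2 * k ≤ n) (x : R) :
    ∑ m ∈ range (n + 1), ((n.choose m * m.choose k * (n - m).choose k : ℕ) : R) * x ^ m =
      ((2 * k).choose k : R) * n.choose (2 * k) * x ^ k * (1 + x) ^ (n - 2 * k) := by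
  obtain ⟨r, rfl⟩ := exists_add_of_le hk
  rw [show 2 * k + r + 1 = k + (k + r + 1) by omega, sum_range_add,
    sum_eq_zero fun m hm => by rw [choose_eq_zero_of_lt (mem_range.1 hm)]; simp, zero_add,
    Nat.add_sub_cancel_left, add_comm 1 x, add_pow, mul_sum,
    sum_subset (range_subset_range.2 (show r + 1 ≤ k + r + 1 by omega)) fun j _ hj => ?_]
  · refine sum_congr rfl fun j _ => ?_
    rw [choose_mul_choose_mul_choose_sub (le_add_right k j), Nat.add_sub_cancel_left,
      Nat.add_sub_cancel_left]
    push_cast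
    ring
  · rw [choose_eq_zero_of_lt (n := r) (by simpa using hj)]
    simp

theorem typeB_associahedron_gamma_expansion_general (n : ℕ) (x : ℝ) :
    ∑ k ∈ Finset.range (n + 1), (n.choose k : ℝ) ^ 2 * x ^ k =
      ∑ k ∈ Finset.range (n / 2 + 1),
        ((2 * k).choose k : ℝ) * (n.choose (2 * k)) * x ^ k * (1 + x) ^ (n - 2 * k) := by
  let T (m k : ℕ) : ℝ := ((n.choose m * m.choose k * (n - m).choose k : ℕ) : ℝ) * x ^ m
  have choose_sq_mul_pow : ∀ m ∈ range (n + 1),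
      (n.choose m : ℝ) ^ 2 * x ^ m = ∑ k ∈ range (n + 1), T m k := by
    intro m hm
    rw [← sum_mul, ← Nat.cast_sum]
    simp_rw [mul_assoc, ← mul_sum,
      ← Nat.choose_eq_sum_range_choose_mul_choose_sub (mem_range_succ_iff.1 hm)]
    push_cast
    ring
  calc _ = ∑ m ∈ range (n + 1), ∑ k ∈ range (n + 1), T m k := sum_congr rfl choose_sq_mul_pow
    _ = ∑ k ∈ range (n + 1), ∑ m ∈ range (n + 1), T m k := sum_comm
    _ = ∑ k ∈ range (n / 2 + 1), ∑ m ∈ range (n + 1), T m k := by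
      refine (sum_subset (range_subset_range.2 (by omega)) fun k _ hk => ?_).symm
      have hnk : n < 2 * k := by rw [mem_range] at hk; omega
      refine sum_eq_zero fun m _ => ?_
      simp only [T, Nat.choose_mul_choose_mul_choose_sub_eq_zero hnk, Nat.cast_zero, zero_mul]
    _ = _ := sum_congr rfl fun k hk =>
      sum_range_choose_mul_choose_mul_choose_sub_mul_pow (by rw [mem_range] at hk; omega) x

/-- Gamma-expansion of the `h`-polynomial of the type `B` associahedron: for `n ≥ 1`,
`Σ_{k=0}^{n} C(n,k)² x^k = Σ_{k=0}^{⌊n/2⌋} C(2k,k) C(n,2k) x^k (1+x)^{n−2k}`. -/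
theorem typeB_associahedron_gamma_expansion (n : ℕ) (hn : 1 ≤ n) (x : ℝ) :
    ∑ k ∈ Finset.range (n + 1), (n.choose k : ℝ) ^ 2 * x ^ k =
      ∑ k ∈ Finset.range (n / 2 + 1),
        ((2 * k).choose k : ℝ) * (n.choose (2 * k)) * x ^ k * (1 + x) ^ (n - 2 * k) :=
  typeB_associahedron_gamma_expansion_general n x
end

section
/- Define F(n,k) = C_k · C(n−1, 2k) where C_k is the k-th Catalan number. Then for n ≥ 2 and k ≥ 0, (n+1) F(n,k) = (n+2k+1) F(n−1,k) + 4(n−2k) F(n−1,k−1), with F(1,0)=1 and F(1,k)=0 for k ≥ 1 (where F(n,−1) = 0). -/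
/-- `F(n,k) = C_k · C(n−1,2k)` (with `C_k` the `k`-th Catalan number),
extended by `F(n,k) = 0` for `k < 0`. -/
def Fgamma (n : ℕ) (k : ℤ) : ℤ :=
  if k < 0 then 0 else (catalan k.toNat : ℤ) * ((n - 1).choose (2 * k.toNat) : ℤ)

lemma cat_nat (i : ℕ) : (i+2) * catalan (i+1) = 2*(2*i+1) * catalan i := by
  have h1 := Nat.succ_mul_centralBinom_succ i
  have h2 := succ_mul_catalan_eq_centralBinom i
  have h3 := succ_mul_catalan_eq_centralBinom (i+1)
  apply Nat.eq_of_mul_eq_mul_left (show 0 < i+1 by omega)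
  calc (i+1) * ((i+2) * catalan (i+1)) = (i+1) * Nat.centralBinom (i+1) := by rw [h3]
    _ = 2*(2*i+1) * Nat.centralBinom i := h1
    _ = 2*(2*i+1) * ((i+1) * catalan i) := by rw [h2]
    _ = (i+1) * (2*(2*i+1) * catalan i) := by ring

/-- The recurrence for the gamma-coefficients of the type `A` associahedron:
`F(1,0)=1`, `F(1,k)=0` for `k ≥ 1`, and for `n ≥ 2` and `k ≥ 0`,
`(n+1)F(n,k) = (n+2k+1)F(n−1,k) + 4(n−2k)F(n−1,k−1)` (with `F(n,−1)=0`). -/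
theorem Fgamma_recurrence :
    Fgamma 1 0 = 1 ∧ (∀ k : ℤ, 1 ≤ k → Fgamma 1 k = 0) ∧
    ∀ n : ℕ, 2 ≤ n → ∀ k : ℤ, 0 ≤ k →
      ((n : ℤ) + 1) * Fgamma n k =
        ((n : ℤ) + 2 * k + 1) * Fgamma (n - 1) k +
          4 * ((n : ℤ) - 2 * k) * Fgamma (n - 1) (k - 1) := by
  refine ⟨by simp [Fgamma], fun k hk => ?_, fun n hn k hk => ?_⟩
  · have h0 : ¬ k < 0 := by omega
    have hj : 0 < 2 * k.toNat := by omega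
    simp [Fgamma, h0, Nat.choose_eq_zero_of_lt hj]
  · obtain ⟨j, rfl⟩ : ∃ j : ℕ, k = (j : ℤ) := ⟨k.toNat, by omega⟩
    obtain ⟨m, rfl⟩ : ∃ m : ℕ, n = m + 2 := ⟨n - 2, by omega⟩
    rcases Nat.eq_zero_or_pos j with rfl | hj
    · simp [Fgamma]
    · obtain ⟨i, rfl⟩ : ∃ i : ℕ, j = i + 1 := ⟨j - 1, by omega⟩
      have ht1 : ((i:ℤ)+1).toNat = i+1 := by omega
      have ht2 : ((i:ℤ)+1-1).toNat = i := by omega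
      have hF1 : Fgamma (m+2) ((i:ℤ)+1) = (catalan (i+1) : ℤ) * ((m+1).choose (2*(i+1)) : ℤ) := by
        rw [Fgamma, if_neg (by omega), ht1]; norm_num
      have hF2 : Fgamma (m+2-1) ((i:ℤ)+1) = (catalan (i+1) : ℤ) * (m.choose (2*(i+1)) : ℤ) := by
        rw [Fgamma, if_neg (by omega), ht1]; norm_num
      have hF3 : Fgamma (m+2-1) ((i:ℤ)+1-1) = (catalan i : ℤ) * (m.choose (2*i) : ℤ) := by
        rw [Fgamma, if_neg (by omega), ht2]; norm_num
      push_cast at hF1 hF2 hF3 ⊢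
      rw [hF1, hF2, hF3]
      -- catalan relation, cast to ℤ
      have e4 : ((i:ℤ)+2) * catalan (i+1) = 2*(2*i+1) * catalan i := by
        exact_mod_cast cat_nat i
      by_cases hm : 2*(i+1) ≤ m + 1
      · -- Pascal
        have e1 : (((m+1).choose (2*(i+1)) : ℤ)) = m.choose (2*(i+1)) + m.choose (2*i+1) := by
          have h : (m+1).choose (2*(i+1)) = m.choose (2*i+1) + m.choose (2*(i+1)) := by
            rw [show 2*(i+1) = 2*i+1+1 from by ring]
            exact Nat.choose_succ_succ m (2*i+1)
          push_cast [h]; ring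
        have e2 : (m.choose (2*(i+1)) : ℤ) * (2*(i+1)) = m.choose (2*i+1) * ((m:ℤ) - (2*i+1)) := by
          have h := Nat.choose_succ_right_eq m (2*i+1)
          rw [show 2*i+1+1 = 2*(i+1) from by ring] at h
          have h2 : (2*i+1 : ℕ) ≤ m := by omega
          calc (m.choose (2*(i+1)) : ℤ) * (2*(i+1))
              = ((m.choose (2*(i+1)) * (2*(i+1)) : ℕ) : ℤ) := by push_cast; ring
            _ = ((m.choose (2*i+1) * (m - (2*i+1)) : ℕ) : ℤ) := by rw [h]
            _ = m.choose (2*i+1) * ((m:ℤ) - (2*i+1)) := by push_cast [Nat.cast_sub h2]; ring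
        have e3 : (m.choose (2*i+1) : ℤ) * (2*i+1) = m.choose (2*i) * ((m:ℤ) - (2*i)) := by
          have h := Nat.choose_succ_right_eq m (2*i)
          have h2 : (2*i : ℕ) ≤ m := by omega
          calc (m.choose (2*i+1) : ℤ) * (2*i+1) = ((m.choose (2*i+1) * (2*i+1) : ℕ) : ℤ) := by push_cast; ring
            _ = ((m.choose (2*i) * (m - 2*i) : ℕ) : ℤ) := by rw [h]
            _ = m.choose (2*i) * ((m:ℤ) - (2*i)) := by push_cast [Nat.cast_sub h2]; ring
        linear_combination ((m:ℤ)+3) * (catalan (i+1) : ℤ) * e1 - (catalan (i+1) : ℤ) * e2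
          + 4 * (catalan i : ℤ) * e3 + 2 * (m.choose (2*i+1) : ℤ) * e4
      · -- degenerate: large k
        have c1 : (m+1).choose (2*(i+1)) = 0 := Nat.choose_eq_zero_of_lt (by omega)
        have c2 : m.choose (2*(i+1)) = 0 := Nat.choose_eq_zero_of_lt (by omega)
        rcases Nat.lt_or_ge m (2*i) with hlt | hge
        · have c3 : m.choose (2*i) = 0 := Nat.choose_eq_zero_of_lt hlt
          simp [c1, c2, c3]
        · have : m = 2*i := by omega
          subst this
          rw [c1, c2]
          push_cast
          ring
end

section
/- Define H(n,k) = C(2k,k) · C(n,2k). Then for n ≥ 2 and k ≥ 0, n·H(n,k) = (n+2k) H(n−1,k) + 4(n−2k+1) H(n−1,k−1), with H(1,0)=1 and H(1,k)=0 for k ≥ 1 (where H(n,−1)=0). -/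
/-- `H(n,k) = C(2k,k) · C(n,2k)`, extended by `H(n,k) = 0` for `k < 0`. -/
def Hgamma (n : ℕ) (k : ℤ) : ℤ :=
  if k < 0 then 0 else ((2 * k.toNat).choose k.toNat : ℤ) * (n.choose (2 * k.toNat) : ℤ)

lemma hg_nonneg (n : ℕ) (k : ℤ) (hk : 0 ≤ k) :
    Hgamma n k = ((2 * k.toNat).choose k.toNat : ℤ) * (n.choose (2 * k.toNat) : ℤ) := by
  simp [Hgamma, not_lt.mpr hk]

/-- The key binomial identity, in ℤ, for `n = m + 2j + 2`, `k = j + 1`. -/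
lemma key (m j : ℕ) :
    ((m + 2*j + 2 : ℕ) : ℤ) * (((2*j+2).choose (j+1) : ℤ) * ((m+2*j+2).choose (2*j+2) : ℤ))
      = ((m + 4*j + 4 : ℕ) : ℤ) * (((2*j+2).choose (j+1) : ℤ) * ((m+2*j+1).choose (2*j+2) : ℤ))
        + 4 * ((m + 1 : ℕ) : ℤ) * (((2*j).choose j : ℤ) * ((m+2*j+1).choose (2*j) : ℤ)) := by
  -- variables
  set a : ℤ := ((2*j).choose j : ℤ) with ha
  set b : ℤ := ((2*j+2).choose (j+1) : ℤ) with hb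
  set t : ℤ := ((m+2*j+1).choose (2*j) : ℤ) with ht
  set u : ℤ := ((m+2*j+1).choose (2*j+1) : ℤ) with hu
  set v : ℤ := ((m+2*j+1).choose (2*j+2) : ℤ) with hv
  set w : ℤ := ((m+2*j+2).choose (2*j+2) : ℤ) with hw
  have h1 : b * ((j:ℤ)+1)^2 = (2*(j:ℤ)+2) * (2*(j:ℤ)+1) * a := by
    have e1 : (2*j+2) * (2*j+1).choose j = (2*j+2).choose (j+1) * (j+1) := by
      have := Nat.add_one_mul_choose_eq (2*j+1) j
      simpa [Nat.succ_eq_add_one] using this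
    have e2 : (2*j+1) * (2*j).choose j = (2*j+1).choose (j+1) * (j+1) := by
      have := Nat.add_one_mul_choose_eq (2*j) j
      simpa [Nat.succ_eq_add_one] using this
    have e3 : (2*j+1).choose j = (2*j+1).choose (j+1) := by
      have : (2*j+1) - (j+1) = j := by omega
      calc (2*j+1).choose j = (2*j+1).choose ((2*j+1)-(j+1)) := by rw [this]
        _ = (2*j+1).choose (j+1) := Nat.choose_symm (by omega)
    have enat : (2*j+2).choose (j+1) * ((j+1)*(j+1)) = (2*j+2) * ((2*j+1) * (2*j).choose j) := by
      calc (2*j+2).choose (j+1) * ((j+1)*(j+1))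
          = ((2*j+2).choose (j+1) * (j+1)) * (j+1) := by ring
        _ = ((2*j+2) * (2*j+1).choose j) * (j+1) := by rw [e1]
        _ = (2*j+2) * ((2*j+1).choose (j+1) * (j+1)) := by rw [e3]; ring
        _ = (2*j+2) * ((2*j+1) * (2*j).choose j) := by rw [e2]
    have := congrArg (Nat.cast : ℕ → ℤ) enat
    push_cast at this
    rw [hb, ha]
    push_cast
    linarith [this]
  have h2 : u * (2*(j:ℤ)+1) = t * ((m:ℤ)+1) := by
    have enat : (m+2*j+1).choose (2*j+1) * (2*j+1) = (m+2*j+1).choose (2*j) * (m+1) := by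
      have := Nat.choose_succ_right_eq (m+2*j+1) (2*j)
      have hs : m + 2*j + 1 - 2*j = m + 1 := by omega
      simpa [hs] using this
    have := congrArg (Nat.cast : ℕ → ℤ) enat
    push_cast at this
    rw [hu, ht]; push_cast; linarith [this]
  have h3 : v * (2*(j:ℤ)+2) = u * (m:ℤ) := by
    have enat : (m+2*j+1).choose (2*j+2) * (2*j+2) = (m+2*j+1).choose (2*j+1) * m := by
      have := Nat.choose_succ_right_eq (m+2*j+1) (2*j+1)
      have hs : m + 2*j + 1 - (2*j+1) = m := by omega
      simpa [hs, Nat.add_assoc] using this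
    have := congrArg (Nat.cast : ℕ → ℤ) enat
    push_cast at this
    rw [hv, hu]; push_cast; linarith [this]
  have h4 : w = v + u := by
    have enat : (m+2*j+2).choose (2*j+2) = (m+2*j+1).choose (2*j+1) + (m+2*j+1).choose (2*j+2) := by
      have := Nat.choose_succ_succ (m+2*j+1) (2*j+1)
      simpa [Nat.add_assoc] using this
    have := congrArg (Nat.cast : ℕ → ℤ) enat
    push_cast at this
    rw [hw, hv, hu]; push_cast; linarith [this]
  have hP : ((j:ℤ)+1)^2 * ((2*(j:ℤ)+1) * (2*(j:ℤ)+2)) ≠ 0 := by positivity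
  refine mul_left_cancel₀ hP ?_
  push_cast
  linear_combination
    ((2*(j:ℤ)+1)*(2*(j:ℤ)+2)) * (((m:ℤ)+2*j+2)*w - ((m:ℤ)+4*j+4)*v) * h1
    + ((2*(j:ℤ)+1)*(2*(j:ℤ)+2)) * (2*(j:ℤ)+2)^2 * a * h2
    - ((2*(j:ℤ)+1)*(2*(j:ℤ)+2))^2 * a * h3
    + ((2*(j:ℤ)+1)*(2*(j:ℤ)+2))^2 * a * ((m:ℤ)+2*j+2) * h4

/-- The recurrence for the gamma-coefficients of the type `B` associahedron. -/
theorem Hgamma_recurrence :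
    Hgamma 1 0 = 1 ∧ (∀ k : ℤ, 1 ≤ k → Hgamma 1 k = 0) ∧
    ∀ n : ℕ, 2 ≤ n → ∀ k : ℤ, 0 ≤ k →
      (n : ℤ) * Hgamma n k =
        ((n : ℤ) + 2 * k) * Hgamma (n - 1) k +
          4 * ((n : ℤ) - 2 * k + 1) * Hgamma (n - 1) (k - 1) := by
  refine ⟨by simp [Hgamma], ?_, ?_⟩
  · intro k hk
    rw [hg_nonneg 1 k (by omega)]
    have h2 : 1 < 2 * k.toNat := by omega
    simp [Nat.choose_eq_zero_of_lt h2]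
  · intro n hn k hk
    -- k = K : ℕ
    obtain ⟨K, rfl⟩ : ∃ K : ℕ, k = (K : ℤ) := ⟨k.toNat, (Int.toNat_of_nonneg hk).symm⟩
    rcases Nat.eq_zero_or_pos K with rfl | hK
    · -- k = 0
      have : (0:ℤ) - 1 < 0 := by norm_num
      simp [Hgamma, this]
    · -- k = j + 1
      obtain ⟨j, rfl⟩ : ∃ j : ℕ, K = j + 1 := ⟨K - 1, by omega⟩
      have hk1 : ((j:ℤ)+1) - 1 = (j:ℤ) := by ring
      have e0 : Hgamma n ((j:ℤ)+1) = ((2*(j+1)).choose (j+1) : ℤ) * (n.choose (2*(j+1)) : ℤ) := by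
        rw [show ((j:ℤ)+1) = ((j+1 : ℕ) : ℤ) by push_cast; ring, hg_nonneg _ _ (by positivity)]
        simp
      have e1 : Hgamma (n-1) ((j:ℤ)+1)
          = ((2*(j+1)).choose (j+1) : ℤ) * ((n-1).choose (2*(j+1)) : ℤ) := by
        rw [show ((j:ℤ)+1) = ((j+1 : ℕ) : ℤ) by push_cast; ring, hg_nonneg _ _ (by positivity)]
        simp
      have e2 : Hgamma (n-1) (((j:ℤ)+1) - 1)
          = ((2*j).choose j : ℤ) * ((n-1).choose (2*j) : ℤ) := by
        rw [hk1, hg_nonneg _ _ (by positivity)]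
        simp
      push_cast
      rw [e0, e1, e2]
      -- case split on n vs 2j+2
      rcases le_or_gt (2*j+2) n with hle | hlt
      · -- n = m + 2j + 2
        obtain ⟨m, rfl⟩ : ∃ m : ℕ, n = m + 2*j + 2 := ⟨n - (2*j+2), by omega⟩
        have hsub : m + 2*j + 2 - 1 = m + 2*j + 1 := by omega
        rw [hsub]
        have := key m j
        push_cast at this ⊢
        have harr : ∀ x : ℕ, (x + 2*j + 2 : ℕ).choose (2*(j+1)) = (x+2*j+2).choose (2*j+2) := by
          intro x; norm_num [Nat.mul_add]
        rw [show 2*(j+1) = 2*j+2 by ring] at *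
        linarith [this]
      · rcases Nat.lt_or_ge n (2*j+2) with hlt2 | hge
        · -- 2j+2 ≥ n+1 : two subcases
          have hz0 : n.choose (2*(j+1)) = 0 := Nat.choose_eq_zero_of_lt (by omega)
          have hz1 : (n-1).choose (2*(j+1)) = 0 := Nat.choose_eq_zero_of_lt (by omega)
          rcases Nat.lt_or_ge (n-1) (2*j) with hlt3 | hge3
          · have hz2 : (n-1).choose (2*j) = 0 := Nat.choose_eq_zero_of_lt hlt3
            rw [hz0, hz1, hz2]; push_cast; ring
          · -- n - 1 ≥ 2j and n < 2j+2 ⇒ n = 2j+1, coefficient n - 2k + 2 ... = 0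
            have hn' : n = 2*j + 1 := by omega
            have hc : (n:ℤ) - 2*((j:ℤ)+1) + 1 = 0 := by rw [hn']; push_cast; ring
            rw [hz0, hz1]
            push_cast
            push_cast at hc
            rw [show 4 * ((n:ℤ) - 2 * ((j:ℤ)+1) + 1) = 0 by linarith]
            ring_nf
        · omega
end

section
/- Let f = sec(2x), g = 2 tan(2x), and let D denote d/dx. For all n ≥ 1, D^n(f) = Σ_{k=0}^{⌊n/2⌋} b(n,k) f^{2k+1} g^{n−2k}, where b(n,k) are defined by b(1,0)=1, b(1,k)=0 for k≥1, and b(n,k) = (2k+1)b(n−1,k) + 4(n+1−2k)b(n−1,k−1). -/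
/-!
Only the differential relations `D f = f g` and `D g = 4 f²` matter. They give
`D (f^a g^m) = a f^a g^(m+1) + 4 m f^(a+2) g^(m-1)`, so differentiating
`Σ_k b(n,k) f^(2k+1) g^(n-2k)` and shifting `k` in the second part produces exactly the
recurrence for `b(n+1, ·)`. The recurrence also forces `b(n,k) = 0` unless `0 ≤ 2k ≤ n`,
which makes the range of summation irrelevant and the truncated exponent `n - 2k` harmless.
-/

open Finset

def IsGammaRecurrence (b : ℕ → ℤ → ℝ) : Prop :=
  ∀ n : ℕ, 2 ≤ n → ∀ k : ℤ,
    b n k = (2 * k + 1) * b (n - 1) k + 4 * (n + 1 - 2 * k) * b (n - 1) (k - 1)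

section Coefficients

variable {b : ℕ → ℤ → ℝ}

theorem IsGammaRecurrence.eq_zero_of_neg (hb1' : ∀ k : ℤ, k ≠ 0 → b 1 k = 0)
    (hrec : IsGammaRecurrence b) {n : ℕ} (hn : 1 ≤ n) {k : ℤ} (hk : k < 0) : b n k = 0 := by
  induction n, hn using Nat.le_induction generalizing k with
  | base => exact hb1' k hk.ne
  | succ m hm ih =>
    rw [hrec (m + 1) (by omega), Nat.add_sub_cancel, ih hk, ih (by omega)]
    ring

theorem IsGammaRecurrence.eq_zero_of_lt (hb1' : ∀ k : ℤ, k ≠ 0 → b 1 k = 0)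
    (hrec : IsGammaRecurrence b) {n : ℕ} (hn : 1 ≤ n) {k : ℤ} (hk : (n : ℤ) < 2 * k) :
    b n k = 0 := by
  induction n, hn using Nat.le_induction generalizing k with
  | base => exact hb1' k (by omega)
  | succ m hm ih =>
    rw [hrec (m + 1) (by omega), Nat.add_sub_cancel, ih (by omega)]
    rcases eq_or_ne (2 * k) (m + 2) with hboundary | hinterior
    · have hzero : ((m + 1 : ℕ) : ℝ) + 1 - 2 * k = 0 := by
        have hcast := congrArg (Int.cast : ℤ → ℝ) hboundary
        push_cast at hcast ⊢
        linarith
      rw [hzero]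
      ring
    · rw [ih (by omega)]
      ring

end Coefficients

theorem hasDerivAt_pow_mul_pow {f g : ℝ → ℝ} {x c : ℝ} (hf : HasDerivAt f (f x * g x) x)
    (hg : HasDerivAt g (c * f x ^ 2) x) (a m : ℕ) :
    HasDerivAt (fun y => f y ^ a * g y ^ m)
      (a * f x ^ a * g x ^ (m + 1) + c * m * f x ^ (a + 2) * g x ^ (m - 1)) x := by
  refine ((hf.fun_pow a).mul (hg.fun_pow m)).congr_deriv ?_
  rcases a with _ | a <;> rcases m with _ | m <;> simp <;> ring

/-- Summing over `k ≤ n` rather than `k ≤ n / 2` avoids the parity of `n`; the extra terms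
vanish by `IsGammaRecurrence.eq_zero_of_lt`. -/
def gammaSum (b : ℕ → ℤ → ℝ) (n : ℕ) (F G : ℝ) : ℝ :=
  ∑ k ∈ range (n + 1), b n k * F ^ (2 * k + 1) * G ^ (n - 2 * k)

section Expansion

variable {b : ℕ → ℤ → ℝ}

/-- The summand is `b n k` times the derivative of `f^(2k+1) g^(n-2k)` given by
`hasDerivAt_pow_mul_pow`. -/
theorem gammaSum_succ (hb1' : ∀ k : ℤ, k ≠ 0 → b 1 k = 0) (hrec : IsGammaRecurrence b)
    {n : ℕ} (hn : 1 ≤ n) (F G : ℝ) :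
    ∑ k ∈ range (n + 1), b n k * ((2 * k + 1 : ℕ) * F ^ (2 * k + 1) * G ^ (n - 2 * k + 1) +
        4 * (n - 2 * k : ℕ) * F ^ (2 * k + 1 + 2) * G ^ (n - 2 * k - 1)) =
      gammaSum b (n + 1) F G := by
  have hvanish := fun k (hk : (n : ℤ) < 2 * k) => hrec.eq_zero_of_lt hb1' hn hk
  have hsplit : ∀ k : ℕ, b (n + 1) k * F ^ (2 * k + 1) * G ^ (n + 1 - 2 * k) =
      (2 * k + 1) * b n k * F ^ (2 * k + 1) * G ^ (n + 1 - 2 * k) +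
        4 * (n + 2 - 2 * k) * b n (k - 1) * F ^ (2 * k + 1) * G ^ (n + 1 - 2 * k) := by
    intro k
    rw [hrec (n + 1) (by omega), Nat.add_sub_cancel]
    push_cast
    ring
  rw [gammaSum, sum_congr rfl fun k _ => hsplit k, sum_add_distrib, sum_range_succ _ (n + 1),
    sum_range_succ' _ (n + 1), hvanish ((n + 1 : ℕ) : ℤ) (by omega),
    hrec.eq_zero_of_neg hb1' hn (by norm_num : ((0 : ℕ) : ℤ) - 1 < 0)]
  simp only [mul_zero, zero_mul, add_zero, ← sum_add_distrib]
  refine sum_congr rfl fun k _ => ?_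
  rw [show ((k + 1 : ℕ) : ℤ) - 1 = k by push_cast; ring]
  rcases le_or_gt (2 * k) n with hk | hk
  · obtain ⟨m, rfl⟩ := Nat.exists_eq_add_of_le hk
    simp only [show 2 * k + m + 1 - 2 * (k + 1) = m - 1 by omega,
      show 2 * k + m + 1 - 2 * k = m + 1 by omega, Nat.add_sub_cancel_left]
    push_cast
    ring
  · rw [hvanish k (by omega)]
    ring

theorem hasDerivAt_gammaSum {f g : ℝ → ℝ} {x : ℝ} (hf : HasDerivAt f (f x * g x) x)
    (hg : HasDerivAt g (4 * f x ^ 2) x) (hb1' : ∀ k : ℤ, k ≠ 0 → b 1 k = 0)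
    (hrec : IsGammaRecurrence b) {n : ℕ} (hn : 1 ≤ n) :
    HasDerivAt (fun y => gammaSum b n (f y) (g y)) (gammaSum b (n + 1) (f x) (g x)) x := by
  rw [← gammaSum_succ hb1' hrec hn]
  unfold gammaSum
  refine HasDerivAt.fun_sum fun k _ => ?_
  simp_rw [mul_assoc (b n k)]
  exact (hasDerivAt_pow_mul_pow hf hg (2 * k + 1) (n - 2 * k)).const_mul (b n k)

theorem iterate_deriv_eq_gammaSum {f g : ℝ → ℝ} {U : Set ℝ} (hU : IsOpen U)
    (hf : ∀ x ∈ U, HasDerivAt f (f x * g x) x) (hg : ∀ x ∈ U, HasDerivAt g (4 * f x ^ 2) x)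
    (hb1 : b 1 0 = 1) (hb1' : ∀ k : ℤ, k ≠ 0 → b 1 k = 0) (hrec : IsGammaRecurrence b)
    {n : ℕ} (hn : 1 ≤ n) : ∀ x ∈ U, deriv^[n] f x = gammaSum b n (f x) (g x) := by
  induction n, hn using Nat.le_induction with
  | base =>
    intro x hx
    simp [gammaSum, sum_range_succ, hb1, hb1' 1 one_ne_zero, (hf x hx).deriv]
  | succ m hm ih =>
    intro x hx
    have hlocal : deriv^[m] f =ᶠ[nhds x] fun y => gammaSum b m (f y) (g y) :=
      Filter.eventuallyEq_of_mem (hU.mem_nhds hx) ih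
    rw [Function.iterate_succ_apply', hlocal.deriv_eq,
      (hasDerivAt_gammaSum (hf x hx) (hg x hx) hb1' hrec hm).deriv]

theorem gammaSum_eq_sum_range_half (hb1' : ∀ k : ℤ, k ≠ 0 → b 1 k = 0)
    (hrec : IsGammaRecurrence b) {n : ℕ} (hn : 1 ≤ n) (F G : ℝ) :
    gammaSum b n F G = ∑ k ∈ range (n / 2 + 1), b n k * F ^ (2 * k + 1) * G ^ (n - 2 * k) := by
  refine (sum_subset (range_subset_range.mpr (by omega)) fun k hk hk' => ?_).symm
  simp only [mem_range] at hk hk'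
  rw [hrec.eq_zero_of_lt hb1' hn (by omega)]
  ring

end Expansion

theorem hasDerivAt_sec_two_mul {x : ℝ} (hx : Real.cos (2 * x) ≠ 0) :
    HasDerivAt (fun x : ℝ => (Real.cos (2 * x))⁻¹)
      ((Real.cos (2 * x))⁻¹ * (2 * Real.tan (2 * x))) x := by
  have hcos : HasDerivAt (fun x : ℝ => Real.cos (2 * x)) (-Real.sin (2 * x) * 2) x := by
    simpa using ((hasDerivAt_id' x).const_mul 2).cos
  refine (hcos.inv hx).congr_deriv ?_
  rw [Real.tan_eq_sin_div_cos]
  field_simp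

theorem hasDerivAt_two_mul_tan_two_mul {x : ℝ} (hx : Real.cos (2 * x) ≠ 0) :
    HasDerivAt (fun x : ℝ => 2 * Real.tan (2 * x)) (4 * ((Real.cos (2 * x))⁻¹) ^ 2) x := by
  have htan : HasDerivAt (fun x : ℝ => Real.tan (2 * x)) (1 / Real.cos (2 * x) ^ 2 * 2) x :=
    (Real.hasDerivAt_tan hx).comp x (by simpa using (hasDerivAt_id x).const_mul 2)
  refine (htan.const_mul 2).congr_deriv ?_
  field_simp
  ring

/-- With `f = sec(2x)`, `g = 2 tan(2x)` and `D = d/dx`: for all `n ≥ 1` and all `x`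
where `cos(2x) ≠ 0`, `D^n(f) = Σ_{k=0}^{⌊n/2⌋} b(n,k) f^{2k+1} g^{n−2k}`,
where `b(1,0)=1`, `b(1,k)=0` for `k ≥ 1` (and for `k < 0`), and
`b(n,k) = (2k+1)b(n−1,k) + 4(n+1−2k)b(n−1,k−1)` for `n ≥ 2`. -/
theorem iterated_deriv_sec_gamma (b : ℕ → ℤ → ℝ)
    (hb1 : b 1 0 = 1) (hb1' : ∀ k : ℤ, k ≠ 0 → b 1 k = 0)
    (hbrec : ∀ n : ℕ, 2 ≤ n → ∀ k : ℤ,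
      b n k = (2 * k + 1) * b (n - 1) k + 4 * (n + 1 - 2 * k) * b (n - 1) (k - 1)) :
    ∀ n : ℕ, 1 ≤ n → ∀ x : ℝ, Real.cos (2 * x) ≠ 0 →
      deriv^[n] (fun x : ℝ => (Real.cos (2 * x))⁻¹) x =
        ∑ k ∈ Finset.range (n / 2 + 1),
          b n k * ((Real.cos (2 * x))⁻¹) ^ (2 * k + 1) *
            (2 * Real.tan (2 * x)) ^ (n - 2 * k) := by
  intro n hn x hx
  have hU : IsOpen {y : ℝ | Real.cos (2 * y) ≠ 0} :=
    isOpen_ne_fun (by fun_prop) continuous_const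
  rw [iterate_deriv_eq_gammaSum hU (fun y => hasDerivAt_sec_two_mul)
    (fun y => hasDerivAt_two_mul_tan_two_mul) hb1 hb1' hbrec hn x hx,
    gammaSum_eq_sum_range_half hb1' hbrec hn]
end

section
/- Let D be the derivation on the polynomial ring ℚ[u,v] determined by D(u) = u²v and D(v) = 4u³. Then for all n ≥ 0, D^n(uv) = n! Σ_{k=0}^{⌊(n+1)/2⌋} 4^k C(n+1, 2k) u^{n+1+2k} v^{n+1−2k}. -/
open Finset MvPolynomial

private def cc (n k : ℕ) : ℕ := n.factorial * 4 ^ k * (n + 1).choose (2 * k)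

private noncomputable def g (n k : ℕ) : MvPolynomial (Fin 2) ℚ :=
  cc n k • (X 0 ^ (n + 1 + 2 * k) * X 1 ^ (n + 1 - 2 * k))

private noncomputable def Aa (n k : ℕ) : MvPolynomial (Fin 2) ℚ :=
  (cc n k * (n + 1 + 2 * k)) • (X 0 ^ (n + 2 + 2 * k) * X 1 ^ (n + 2 - 2 * k))

private noncomputable def Bt (n k : ℕ) : MvPolynomial (Fin 2) ℚ :=
  (cc n k * (4 * (n + 1 - 2 * k))) • (X 0 ^ (n + 4 + 2 * k) * X 1 ^ (n - 2 * k))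

private noncomputable def B' (n : ℕ) : ℕ → MvPolynomial (Fin 2) ℚ
  | 0 => 0
  | j + 1 => Bt n j

private lemma choose_id (n j : ℕ) :
    (n + 1) * (n + 2).choose (2 * j + 2) =
      (n + 3 + 2 * j) * (n + 1).choose (2 * j + 2) +
        (n + 1 - 2 * j) * (n + 1).choose (2 * j) := by
  rcases le_or_gt (2 * j) n with h | h
  · have h1 := Nat.choose_succ_right_eq (n + 1) (2 * j + 1)
    have h2 := Nat.choose_succ_right_eq (n + 1) (2 * j)
    have h3 : (n + 2).choose (2 * j + 2) =
        (n + 1).choose (2 * j + 1) + (n + 1).choose (2 * j + 2) :=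
      Nat.choose_succ_succ (n + 1) (2 * j + 1)
    zify [show 2 * j ≤ n + 1 by omega, show 2 * j + 1 ≤ n + 1 by omega] at h1 h2 h3 ⊢
    linear_combination (n + 1 : ℤ) * h3 - h1 + h2
  · have e0 : (n + 2).choose (2 * j + 2) = 0 := Nat.choose_eq_zero_of_lt (by omega)
    have e1 : (n + 1).choose (2 * j + 2) = 0 := Nat.choose_eq_zero_of_lt (by omega)
    have e2 : n + 1 - 2 * j = 0 := by omega
    simp [e0, e1, e2]

private lemma cc_zero (n : ℕ) : cc (n + 1) 0 = cc n 0 * (n + 1 + 2 * 0) := by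
  simp [cc, Nat.factorial_succ]; ring

private lemma cc_succ (n j : ℕ) :
    cc (n + 1) (j + 1) =
      cc n (j + 1) * (n + 1 + 2 * (j + 1)) + cc n j * (4 * (n + 1 - 2 * j)) := by
  have key := choose_id n j
  have h2 : 2 * (j + 1) = 2 * j + 2 := by ring
  unfold cc
  rw [h2, Nat.factorial_succ]
  calc (n + 1) * n.factorial * 4 ^ (j + 1) * (n + 2).choose (2 * j + 2)
      = n.factorial * 4 ^ (j + 1) * ((n + 1) * (n + 2).choose (2 * j + 2)) := by ring
    _ = n.factorial * 4 ^ (j + 1) *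
        ((n + 3 + 2 * j) * (n + 1).choose (2 * j + 2) +
          (n + 1 - 2 * j) * (n + 1).choose (2 * j)) := by rw [key]
    _ = n.factorial * 4 ^ (j + 1) * (n + 1).choose (2 * j + 2) * (n + 1 + (2 * j + 2)) +
        n.factorial * 4 ^ j * (n + 1).choose (2 * j) * (4 * (n + 1 - 2 * j)) := by ring

private lemma D_g (D : Derivation ℚ (MvPolynomial (Fin 2) ℚ) (MvPolynomial (Fin 2) ℚ))
    (hu : D (X 0) = X 0 ^ 2 * X 1) (hv : D (X 1) = 4 * X 0 ^ 3) (n k : ℕ) :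
    D (g n k) = Aa n k + Bt n k := by
  rcases le_or_gt (2 * k) (n + 1) with h | h
  · unfold g Aa Bt
    rw [map_nsmul, D.leibniz, D.leibniz_pow, D.leibniz_pow, hu, hv]
    have e1 : n + 1 + 2 * k - 1 = n + 2 * k := by omega
    have e2 : n + 1 - 2 * k - 1 = n - 2 * k := by omega
    have e3 : n + 2 - 2 * k = (n + 1 - 2 * k) + 1 := by omega
    rw [e1, e2, e3]
    simp only [smul_eq_mul, nsmul_eq_mul]
    push_cast [Nat.cast_sub (show 2 * k ≤ n + 1 by omega)]
    ring
  · have h0 : (n + 1).choose (2 * k) = 0 := Nat.choose_eq_zero_of_lt (by omega)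
    simp [g, Aa, Bt, cc, h0]

private lemma main_lemma (D : Derivation ℚ (MvPolynomial (Fin 2) ℚ) (MvPolynomial (Fin 2) ℚ))
    (hu : D (X 0) = X 0 ^ 2 * X 1) (hv : D (X 1) = 4 * X 0 ^ 3) (n : ℕ) :
    (⇑D)^[n] (X 0 * X 1) = ∑ k ∈ Finset.range (n + 2), g n k := by
  induction n with
  | zero =>
    rw [Function.iterate_zero_apply]
    rw [Finset.sum_range_succ, Finset.sum_range_one]
    simp [g, cc]
  | succ n ih =>
    rw [Function.iterate_succ_apply', ih, map_sum]
    rw [Finset.sum_congr rfl (fun k _ => D_g D hu hv n k), Finset.sum_add_distrib]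
    have hBt : ∑ k ∈ Finset.range (n + 2), Bt n k = ∑ j ∈ Finset.range (n + 3), B' n j := by
      rw [Finset.sum_range_succ' (B' n) (n + 2)]
      simp [B']
    have hz : Aa n (n + 2) = 0 := by
      have h0 : (n + 1).choose (2 * (n + 2)) = 0 := Nat.choose_eq_zero_of_lt (by omega)
      simp [Aa, cc, h0]
    have hAa : ∑ k ∈ Finset.range (n + 3), Aa n k = ∑ k ∈ Finset.range (n + 2), Aa n k := by
      rw [Finset.sum_range_succ, hz, add_zero]
    rw [hBt, ← hAa, ← Finset.sum_add_distrib]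
    refine Finset.sum_congr rfl fun j _ => ?_
    match j with
    | 0 =>
      show Aa n 0 + 0 = g (n + 1) 0
      rw [add_zero]
      unfold Aa g
      rw [cc_zero]
    | j + 1 =>
      show Aa n (j + 1) + Bt n j = g (n + 1) (j + 1)
      unfold Aa Bt g
      rw [cc_succ, add_smul]
      have e4 : n + 4 + 2 * j = n + 1 + 1 + 2 * (j + 1) := by omega
      have e5 : n - 2 * j = n + 1 + 1 - 2 * (j + 1) := by omega
      rw [e4, e5]

/-- Let `D` be the derivation on `ℚ[u,v]` with `D(u) = u²v` and `D(v) = 4u³`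
(here `u = X 0`, `v = X 1`).  Then for all `n ≥ 0`,
`D^n(uv) = n! Σ_{k=0}^{⌊(n+1)/2⌋} 4^k C(n+1,2k) u^{n+1+2k} v^{n+1−2k}`. -/
theorem derivation_uv_pow4 (D : Derivation ℚ (MvPolynomial (Fin 2) ℚ) (MvPolynomial (Fin 2) ℚ))
    (hu : D (X 0) = X 0 ^ 2 * X 1) (hv : D (X 1) = 4 * X 0 ^ 3) (n : ℕ) :
    (⇑D)^[n] (X 0 * X 1) =
      (n.factorial : MvPolynomial (Fin 2) ℚ) *
        ∑ k ∈ Finset.range ((n + 1) / 2 + 1),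
          4 ^ k * ((n + 1).choose (2 * k) : MvPolynomial (Fin 2) ℚ) *
            X 0 ^ (n + 1 + 2 * k) * X 1 ^ (n + 1 - 2 * k) := by
  rw [main_lemma D hu hv n, Finset.mul_sum]
  rw [Finset.sum_subset (Finset.range_subset_range.2 (show (n + 1) / 2 + 1 ≤ n + 2 by omega))
    (fun x _ hx => ?_)]
  · refine Finset.sum_congr rfl fun k _ => ?_
    unfold g cc
    rw [nsmul_eq_mul]
    push_cast
    ring
  · have h0 : (n + 1).choose (2 * x) = 0 := by
      apply Nat.choose_eq_zero_of_lt
      simp [Finset.mem_range] at hx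
      omega
    simp [h0]
end

section
/- Let D be the derivation on ℚ[u,v] with D(u) = u²v and D(v) = u³. Then for all n ≥ 0, D^n(u²) = n! Σ_{k=0}^{⌊n/2⌋} C(n+1, 2k+1) u^{n+2+2k} v^{n−2k}. -/
open Finset MvPolynomial


lemma key_nat (n w : ℕ) :
    n.factorial * ((n+1).choose (w+3)) * (n+4+w) +
      n.factorial * ((n+1).choose (w+1)) * (n-w)
    = (n+1).factorial * (n+2).choose (w+3) := by
  rcases le_or_gt (w+1) n with h | h
  · have h1 : (n+1).choose (w+3) * (w+3) = (n+1).choose (w+2) * (n+1-(w+2)) :=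
      Nat.choose_succ_right_eq (n+1) (w+2)
    have h2 : (n+1).choose (w+2) * (w+2) = (n+1).choose (w+1) * (n+1-(w+1)) :=
      Nat.choose_succ_right_eq (n+1) (w+1)
    have h3 : (n+2).choose (w+3) = (n+1).choose (w+2) + (n+1).choose (w+3) :=
      Nat.choose_succ_succ (n+1) (w+2)
    rw [h3, Nat.factorial_succ]
    zify [show w+2 ≤ n+1 by omega, show w+1 ≤ n+1 by omega, show w ≤ n by omega] at h1 h2 ⊢
    linear_combination (n.factorial : ℤ) * h1 - (n.factorial : ℤ) * h2
  · have h0 : n - w = 0 := by omega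
    have h1 : (n+1).choose (w+3) = 0 := Nat.choose_eq_zero_of_lt (by omega)
    have h2 : (n+2).choose (w+3) = 0 := Nat.choose_eq_zero_of_lt (by omega)
    simp [h0, h1, h2]

abbrev P := MvPolynomial (Fin 2) ℚ

lemma step (D : Derivation ℚ P P)
    (hu : D (X 0) = X 0 ^ 2 * X 1) (hv : D (X 1) = X 0 ^ 3) (a b : ℕ) :
    D (X 0 ^ (a+1) * X 1 ^ b) =
      ((a+1 : ℕ) : P) * (X 0 ^ (a+2) * X 1 ^ (b+1)) +
      ((b : ℕ) : P) * (X 0 ^ (a+4) * X 1 ^ (b-1)) := by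
  rw [Derivation.leibniz, Derivation.leibniz_pow, Derivation.leibniz_pow, hu, hv]
  simp only [smul_eq_mul, nsmul_eq_mul, Nat.add_sub_cancel]
  push_cast
  ring

lemma aux (D : Derivation ℚ P P)
    (hu : D (X 0) = X 0 ^ 2 * X 1) (hv : D (X 1) = X 0 ^ 3) (n : ℕ) :
    (⇑D)^[n] (X 0 ^ 2) = ∑ k ∈ range (n+1),
      ((n.factorial * (n+1).choose (2*k+1) : ℕ) : P) *
        (X 0 ^ (n+2+2*k) * X 1 ^ (n-2*k)) := by
  induction n with
  | zero => simp
  | succ n ih =>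
    have hD : ∀ (c : ℕ) (p : P), D ((c:P) * p) = (c:P) * D p := by
      intro c p
      rw [← nsmul_eq_mul, ← nsmul_eq_mul, map_nsmul]
    rw [Function.iterate_succ_apply', ih, map_sum]
    have hterm : ∀ k ∈ range (n+1),
        D (((n.factorial * (n+1).choose (2*k+1) : ℕ) : P) *
            (X 0 ^ (n+2+2*k) * X 1 ^ (n-2*k)))
        = ((n.factorial * (n+1).choose (2*k+1) * (n+2+2*k) : ℕ) : P) *
            (X 0 ^ (n+1+2+2*k) * X 1 ^ (n+1-2*k)) +
          ((n.factorial * (n+1).choose (2*k+1) * (n-2*k) : ℕ) : P) *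
            (X 0 ^ (n+1+2+2*(k+1)) * X 1 ^ (n+1-2*(k+1))) := by
      intro k _
      rw [hD, show n+2+2*k = (n+1+2*k)+1 by ring, step D hu hv (n+1+2*k) (n-2*k)]
      rw [show (n+1+2*k)+2 = n+1+2+2*k by ring, show (n+1+2*k)+4 = n+1+2+2*(k+1) by ring,
          show (n-2*k)-1 = n+1-2*(k+1) by omega]
      rcases le_or_gt (2*k) n with h | h
      · rw [show (n-2*k)+1 = n+1-2*k by omega]
        push_cast; ring
      · have hc : (n+1).choose (2*k+1) = 0 := Nat.choose_eq_zero_of_lt (by omega)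
        simp [hc]
    rw [Finset.sum_congr rfl hterm, Finset.sum_add_distrib]
    have e1 : (∑ k ∈ range (n+1),
          ((n.factorial * (n+1).choose (2*k+1) * (n+2+2*k) : ℕ) : P) *
            (X 0 ^ (n+1+2+2*k) * X 1 ^ (n+1-2*k)))
        = ∑ k ∈ range (n+2),
          ((n.factorial * (n+1).choose (2*k+1) * (n+2+2*k) : ℕ) : P) *
            (X 0 ^ (n+1+2+2*k) * X 1 ^ (n+1-2*k)) := by
      have hc : (n+1).choose (2*(n+1)+1) = 0 := Nat.choose_eq_zero_of_lt (by omega)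
      conv_rhs => rw [Finset.sum_range_succ]
      simp [hc]
    rw [e1]
    conv_rhs => rw [Finset.sum_range_succ']
    conv_lhs => rw [Finset.sum_range_succ']
    rw [add_right_comm, ← Finset.sum_add_distrib]
    congr 1
    · refine Finset.sum_congr rfl fun k _ => ?_
      rw [← add_mul, ← Nat.cast_add]
      congr 2
      rw [show 2*(k+1)+1 = 2*k+3 by ring, show n+2+2*(k+1) = n+4+2*k by ring,
          show n+1+1 = n+2 by ring]
      exact key_nat n (2*k)
    · norm_num [Nat.factorial_succ]
      ring

/-- Let `D` be the derivation on `ℚ[u,v]` with `D(u) = u²v` and `D(v) = u³`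
(here `u = X 0`, `v = X 1`).  Then for all `n ≥ 0`,
`D^n(u²) = n! Σ_{k=0}^{⌊n/2⌋} C(n+1,2k+1) u^{n+2+2k} v^{n−2k}`. -/
theorem derivation_usq_chebyshev
    (D : Derivation ℚ (MvPolynomial (Fin 2) ℚ) (MvPolynomial (Fin 2) ℚ))
    (hu : D (X 0) = X 0 ^ 2 * X 1) (hv : D (X 1) = X 0 ^ 3) (n : ℕ) :
    (⇑D)^[n] (X 0 ^ 2) =
      (n.factorial : MvPolynomial (Fin 2) ℚ) *
        ∑ k ∈ Finset.range (n / 2 + 1),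
          ((n + 1).choose (2 * k + 1) : MvPolynomial (Fin 2) ℚ) *
            X 0 ^ (n + 2 + 2 * k) * X 1 ^ (n - 2 * k) := by
  rw [aux D hu hv n, Finset.mul_sum]
  calc ∑ k ∈ range (n+1),
        ((n.factorial * (n+1).choose (2*k+1) : ℕ) : P) *
          (X 0 ^ (n+2+2*k) * X 1 ^ (n-2*k))
      = ∑ k ∈ range (n+1),
        (n.factorial : P) * (((n + 1).choose (2 * k + 1) : P) *
          X 0 ^ (n + 2 + 2 * k) * X 1 ^ (n - 2 * k)) := by
        refine Finset.sum_congr rfl fun k _ => ?_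
        push_cast; ring
    _ = ∑ k ∈ range (n/2+1),
        (n.factorial : P) * (((n + 1).choose (2 * k + 1) : P) *
          X 0 ^ (n + 2 + 2 * k) * X 1 ^ (n - 2 * k)) := by
        refine (Finset.sum_subset (Finset.range_subset_range.2 (by omega)) ?_).symm
        intro k _ hk
        simp only [Finset.mem_range, not_lt] at hk
        have hc : (n+1).choose (2*k+1) = 0 := Nat.choose_eq_zero_of_lt (by omega)
        simp [hc]
end

section
/- Let D be the derivation on ℚ[t,u,v] with D(t) = tu², D(u) = u²v, D(v) = 4u³. Then for all n ≥ 0, D^n(t²u²) = (n+1)! t² Σ_{k=0}^{n} T(n,k) u^{2n+2−k} v^k, where T(n,k) = C(n,k)·C(n−k, ⌊(n−k)/2⌋). -/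
/-!
Since `D t = t u²`, we have `D (t² f) = t² (2 u² f + D f)`, so it suffices to show that
`P n = ∑ₖ T(n,k) u^(2n+2-k) v^k` satisfies `(n + 2) P (n + 1) = 2 u² P n + D (P n)`.
Comparing coefficients of `u^(2n+4-j) v^j`, this is the recurrence
`(n+1) T(n,k) = (2n+1-k) T(n-1,k-1) + 2 T(n-1,k) + 4(k+1) T(n-1,k+1)`. After dividing by
`C(n,k)`, that recurrence no longer depends on `k`: it becomes
`(m+1) M(m) = 2 M(m-1) + 4 (m-1) M(m-2)` for `M(m) = C(m,⌊m/2⌋)`, which follows from the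
recurrence of the central binomial coefficients.
-/

open Finset MvPolynomial

/-- `T(n,k) = C(n,k)·C(n−k,⌊(n−k)/2⌋)`, counting left factors of Motzkin paths of
length `n` with `k` horizontal steps. -/
def motzkinT (n k : ℕ) : ℕ := n.choose k * (n - k).choose ((n - k) / 2)

namespace Nat

theorem two_mul_choose_two_mul_add_one (i : ℕ) :
    2 * (2 * i + 1).choose i = centralBinom (i + 1) := by
  rw [centralBinom_eq_two_mul_choose, show 2 * (i + 1) = 2 * i + 1 + 1 by ring,
    choose_succ_succ', choose_symm_half, two_mul]

theorem add_three_mul_choose_add_two_div_two (j : ℕ) :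
    (j + 3) * (j + 2).choose ((j + 2) / 2)
      = 2 * (j + 1).choose ((j + 1) / 2) + 4 * (j + 1) * j.choose (j / 2) := by
  obtain ⟨i, rfl | rfl⟩ := j.even_or_odd'
  · have hB := succ_mul_centralBinom_succ i
    have hodd := two_mul_choose_two_mul_add_one i
    rw [show (2 * i + 2) / 2 = i + 1 by omega, show (2 * i + 1) / 2 = i by omega,
      show 2 * i / 2 = i by omega, show 2 * i + 2 = 2 * (i + 1) by ring,
      ← centralBinom_eq_two_mul_choose, ← centralBinom_eq_two_mul_choose]
    linear_combination 2 * hB - hodd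
  · have hB := succ_mul_centralBinom_succ (i + 1)
    have hodd := two_mul_choose_two_mul_add_one i
    have hodd' := two_mul_choose_two_mul_add_one (i + 1)
    rw [show (2 * i + 1 + 2) / 2 = i + 1 by omega, show (2 * i + 1 + 1) / 2 = i + 1 by omega,
      show (2 * i + 1) / 2 = i by omega, show 2 * i + 1 + 2 = 2 * (i + 1) + 1 by ring,
      show 2 * i + 1 + 1 = 2 * (i + 1) by ring, ← centralBinom_eq_two_mul_choose]
    linear_combination (i + 2) * hodd' + hB - (4 * i + 4) * hodd

end Nat

theorem motzkinT_eq_zero_of_lt {n k : ℕ} (h : n < k) : motzkinT n k = 0 := by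
  simp [motzkinT, Nat.choose_eq_zero_of_lt h]

theorem motzkinT_self (n : ℕ) : motzkinT n n = 1 := by
  simp [motzkinT]

theorem motzkinT_succ_self (n : ℕ) : motzkinT (n + 1) n = n + 1 := by
  simp [motzkinT]

theorem motzkinT_add_left (k m : ℕ) :
    motzkinT (k + m) k = (k + m).choose k * m.choose (m / 2) := by
  simp [motzkinT]

theorem add_two_mul_motzkinT_succ_zero (n : ℕ) :
    (n + 2) * motzkinT (n + 1) 0 = 2 * motzkinT n 0 + 4 * motzkinT n 1 := by
  rcases n with _ | j
  · simp [motzkinT]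
  · simpa [motzkinT, add_assoc, mul_assoc, mul_left_comm] using
      Nat.add_three_mul_choose_add_two_div_two j

theorem add_two_mul_motzkinT_succ_succ (n k : ℕ) :
    (n + 2) * motzkinT (n + 1) (k + 1)
      = (2 * n + 2 - k) * motzkinT n k + 2 * motzkinT n (k + 1)
        + 4 * (k + 2) * motzkinT n (k + 2) := by
  rcases lt_or_ge n k with hnk | hkn
  · simp [motzkinT_eq_zero_of_lt, hnk, Nat.lt_succ_of_lt hnk, Nat.lt_add_right 2 hnk]
  obtain ⟨m, rfl⟩ := Nat.exists_eq_add_of_le hkn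
  rcases m with _ | _ | j
  · rw [add_zero, motzkinT_self, motzkinT_self, motzkinT_eq_zero_of_lt (by omega),
      motzkinT_eq_zero_of_lt (by omega)]
    omega
  · rw [zero_add, motzkinT_succ_self, motzkinT_succ_self, motzkinT_self,
      motzkinT_eq_zero_of_lt (by omega), show 2 * (k + 1) + 2 - k = k + 4 by omega]
    ring
  · have e1 : motzkinT (k + (j + 2) + 1) (k + 1)
        = (k + j + 3).choose (k + 1) * (j + 2).choose ((j + 2) / 2) := by
      rw [show k + (j + 2) + 1 = (k + 1) + (j + 2) by ring, motzkinT_add_left,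
        show k + 1 + (j + 2) = k + j + 3 by ring]
    have e2 : motzkinT (k + (j + 2)) (k + 1)
        = (k + j + 2).choose (k + 1) * (j + 1).choose ((j + 1) / 2) := by
      rw [show k + (j + 2) = (k + 1) + (j + 1) by ring, motzkinT_add_left,
        show k + 1 + (j + 1) = k + j + 2 by ring]
    have e3 : motzkinT (k + (j + 2)) (k + 2) = (k + j + 2).choose (k + 2) * j.choose (j / 2) := by
      rw [show k + (j + 2) = (k + 2) + j by ring, motzkinT_add_left,
        show k + 2 + j = k + j + 2 by ring]
    rw [e1, e2, e3, motzkinT_add_left, show 2 * (k + (j + 2)) + 2 - k = k + 2 * j + 6 by omega]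
    have h1 := Nat.add_one_mul_choose_eq (k + j + 2) k
    have h2 := Nat.choose_succ_right_eq (k + j + 2) k
    have h3 := Nat.choose_succ_right_eq (k + j + 2) (k + 1)
    rw [show k + j + 2 + 1 = k + j + 3 by ring] at h1
    rw [show k + j + 2 - k = j + 2 by omega] at h2
    rw [show k + j + 2 - (k + 1) = j + 1 by omega, show k + 1 + 1 = k + 2 by ring] at h3
    have hM := Nat.add_three_mul_choose_add_two_div_two j
    -- After multiplying by `k + 1`, `h1`–`h3` turn every term into a multiple of
    -- `C(k+j+2, k)`, and what remains is `C(k+j+2, k) * (j + 2)` times `hM`.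
    apply Nat.eq_of_mul_eq_mul_left (show 0 < k + 1 by omega)
    linear_combination (k + j + 4) * ((j + 2).choose ((j + 2) / 2)) * h1.symm
      + 2 * ((j + 1).choose ((j + 1) / 2)) * h2.symm + 4 * (k + 1) * (j.choose (j / 2)) * h3.symm
      + 4 * (j + 1) * (j.choose (j / 2)) * h2.symm + (j + 2) * (k + j + 2).choose k * hM

section

variable {R A : Type*} [CommSemiring R] [CommSemiring A] [Algebra R A] (D : Derivation R A A)
  {u v : A}

def motzkinPoly (u v : A) (n : ℕ) : A :=
  ∑ k ∈ range (n + 1), (motzkinT n k : A) * u ^ (2 * n + 2 - k) * v ^ k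

-- At `k = 0` the truncated exponent `k - 1` is harmless: its coefficient `4 * k` vanishes.
theorem derivation_pow_mul_pow (hu : D u = u ^ 2 * v) (hv : D v = 4 * u ^ 3) (a k : ℕ) :
    D (u ^ a * v ^ k) = a * u ^ (a + 1) * v ^ (k + 1) + 4 * k * u ^ (a + 3) * v ^ (k - 1) := by
  rw [Derivation.leibniz, Derivation.leibniz_pow, Derivation.leibniz_pow, hu, hv]
  rcases a with _ | a <;> rcases k with _ | k <;> simp <;> ring

theorem derivation_motzkinPoly (hu : D u = u ^ 2 * v) (hv : D v = 4 * u ^ 3) (n : ℕ) :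
    D (motzkinPoly u v n)
      = ∑ k ∈ range (n + 1),
          ((2 * n + 2 - k : ℕ) : A) * motzkinT n k * u ^ (2 * n + 3 - k) * v ^ (k + 1)
        + ∑ j ∈ range (n + 2),
            4 * ((j : A) + 1) * motzkinT n (j + 1) * u ^ (2 * n + 4 - j) * v ^ j := by
  have hterm (k : ℕ) (hk : k ≤ n) : D ((motzkinT n k : A) * u ^ (2 * n + 2 - k) * v ^ k)
      = ((2 * n + 2 - k : ℕ) : A) * motzkinT n k * u ^ (2 * n + 3 - k) * v ^ (k + 1)
        + 4 * (k : A) * motzkinT n k * u ^ (2 * n + 5 - k) * v ^ (k - 1) := by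
    rw [mul_assoc, Derivation.leibniz, Derivation.map_natCast, derivation_pow_mul_pow D hu hv,
      show 2 * n + 2 - k + 1 = 2 * n + 3 - k by omega,
      show 2 * n + 2 - k + 3 = 2 * n + 5 - k by omega, smul_zero, add_zero, smul_eq_mul]
    ring
  rw [motzkinPoly, map_sum, sum_congr rfl fun k hk => hterm k (by grind), sum_add_distrib]
  congr 1
  rw [sum_range_succ', eventually_constant_sum (N := n) _ (show n ≤ n + 2 by omega)]
  · simp only [Nat.cast_zero, mul_zero, zero_mul, add_zero, Nat.cast_add, Nat.cast_one,
      Nat.add_sub_cancel]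
    refine sum_congr rfl fun k hk => ?_
    rw [show 2 * n + 5 - (k + 1) = 2 * n + 4 - k by omega]
  · intro j hj
    simp [motzkinT_eq_zero_of_lt (show n < j + 1 by omega)]

theorem motzkinPoly_succ (hu : D u = u ^ 2 * v) (hv : D v = 4 * u ^ 3) (n : ℕ) :
    ((n : A) + 2) * motzkinPoly u v (n + 1)
      = 2 * u ^ 2 * motzkinPoly u v n + D (motzkinPoly u v n) := by
  have hL : ((n : A) + 2) * motzkinPoly u v (n + 1)
      = ∑ j ∈ range (n + 2),
          ((n : A) + 2) * motzkinT (n + 1) j * u ^ (2 * n + 4 - j) * v ^ j := by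
    rw [motzkinPoly, mul_sum, show 2 * (n + 1) + 2 = 2 * n + 4 by ring]
    simp only [mul_assoc]
  have hA : 2 * u ^ 2 * motzkinPoly u v n
      = ∑ j ∈ range (n + 2), 2 * (motzkinT n j : A) * u ^ (2 * n + 4 - j) * v ^ j := by
    rw [eventually_constant_sum (N := n + 1)
        (fun j hj => by simp [motzkinT_eq_zero_of_lt (show n < j by omega)]) (by omega),
      motzkinPoly, mul_sum]
    refine sum_congr rfl fun j hj => ?_
    rw [show 2 * n + 4 - j = (2 * n + 2 - j) + 2 by grind, pow_add]
    ring
  have h0 : ((n : A) + 2) * motzkinT (n + 1) 0 = 2 * motzkinT n 0 + 4 * motzkinT n 1 := by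
    simpa using congrArg (Nat.cast : ℕ → A) (add_two_mul_motzkinT_succ_zero n)
  have hS (k : ℕ) : ((n : A) + 2) * motzkinT (n + 1) (k + 1) = ((2 * n + 2 - k : ℕ) : A)
      * motzkinT n k + 2 * motzkinT n (k + 1) + 4 * ((k : A) + 2) * motzkinT n (k + 2) := by
    simpa using congrArg (Nat.cast : ℕ → A) (add_two_mul_motzkinT_succ_succ n k)
  rw [hL, hA, derivation_motzkinPoly D hu hv, sum_range_succ', sum_range_succ' _ (n + 1),
    sum_range_succ' _ (n + 1)]
  simp only [hS, h0, show ∀ k, 2 * n + 4 - (k + 1) = 2 * n + 3 - k by omega, add_mul,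
    sum_add_distrib, Nat.cast_add, Nat.cast_one, Nat.cast_zero, zero_add, add_assoc,
    one_add_one_eq_two]
  ring

theorem iterate_derivation_sq_mul_sq {t : A} (ht : D t = t * u ^ 2) (hu : D u = u ^ 2 * v)
    (hv : D v = 4 * u ^ 3) (n : ℕ) :
    D^[n] (t ^ 2 * u ^ 2) = ((n + 1).factorial : A) * t ^ 2 * motzkinPoly u v n := by
  induction n with
  | zero => simp [motzkinPoly, motzkinT]
  | succ n ih =>
    have hstep : D (((n + 1).factorial : A) * t ^ 2 * motzkinPoly u v n)
        = ((n + 1).factorial : A) * t ^ 2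
          * (2 * u ^ 2 * motzkinPoly u v n + D (motzkinPoly u v n)) := by
      rw [Derivation.leibniz, Derivation.leibniz, Derivation.leibniz_pow,
        Derivation.map_natCast, ht]
      simp only [smul_eq_mul, nsmul_eq_mul]
      ring
    rw [Function.iterate_succ_apply', ih, hstep, ← motzkinPoly_succ D hu hv,
      Nat.factorial_succ (n + 1)]
    push_cast
    ring

end

/-- Let `D` be the derivation on `ℚ[t,u,v]` with `D(t) = tu²`, `D(u) = u²v`,
`D(v) = 4u³` (here `t = X 0`, `u = X 1`, `v = X 2`).  Then for all `n ≥ 0`,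
`D^n(t²u²) = (n+1)! t² Σ_{k=0}^{n} T(n,k) u^{2n+2−k} v^k`. -/
theorem derivation_t2u2_motzkin
    (D : Derivation ℚ (MvPolynomial (Fin 3) ℚ) (MvPolynomial (Fin 3) ℚ))
    (ht : D (X 0) = X 0 * X 1 ^ 2) (hu : D (X 1) = X 1 ^ 2 * X 2)
    (hv : D (X 2) = 4 * X 1 ^ 3) (n : ℕ) :
    (⇑D)^[n] (X 0 ^ 2 * X 1 ^ 2) =
      ((n + 1).factorial : MvPolynomial (Fin 3) ℚ) * X 0 ^ 2 *
        ∑ k ∈ Finset.range (n + 1),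
          (motzkinT n k : MvPolynomial (Fin 3) ℚ) * X 1 ^ (2 * n + 2 - k) * X 2 ^ k :=
  iterate_derivation_sq_mul_sq D ht hu hv n
end

section
/- Let D be the derivation on ℚ[t,u,v] with D(t) = tu², D(u) = u²v, D(v) = 4u³. Then for all n ≥ 0, D^n(t²u) = n! t² Σ_{k=0}^{n} C(n,k) 2^{n−k} u^{2n+1−k} v^k. -/
open Finset MvPolynomial

private lemma sum_eq_pow_form (n : ℕ) :
    ∑ k ∈ Finset.range (n + 1),
        (n.choose k : MvPolynomial (Fin 3) ℚ) * 2 ^ (n - k) *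
          X 1 ^ (2 * n + 1 - k) * X 2 ^ k =
      X 1 ^ (n + 1) * (2 * X 1 + X 2) ^ n := by
  rw [add_comm (2 * X 1) (X 2), add_pow, Finset.mul_sum]
  refine Finset.sum_congr rfl fun k hk => ?_
  have hkn : k ≤ n := Nat.lt_succ_iff.mp (Finset.mem_range.mp hk)
  have h1 : 2 * n + 1 - k = (n + 1) + (n - k) := by omega
  rw [h1, pow_add, mul_pow]
  ring

private lemma iter_eq
    (D : Derivation ℚ (MvPolynomial (Fin 3) ℚ) (MvPolynomial (Fin 3) ℚ))
    (ht : D (X 0) = X 0 * X 1 ^ 2) (hu : D (X 1) = X 1 ^ 2 * X 2)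
    (hv : D (X 2) = 4 * X 1 ^ 3) (n : ℕ) :
    (⇑D)^[n] (X 0 ^ 2 * X 1) =
      (n.factorial : MvPolynomial (Fin 3) ℚ) * X 0 ^ 2 *
        (X 1 ^ (n + 1) * (2 * X 1 + X 2) ^ n) := by
  have expand : ∀ a b : MvPolynomial (Fin 3) ℚ, D (a * b) = a * D b + b * D a := by
    intro a b; rw [D.leibniz]; simp [smul_eq_mul]
  have hw : D (2 * X 1 + X 2) = 2 * X 1 ^ 2 * (2 * X 1 + X 2) := by
    have h2 : (2 : MvPolynomial (Fin 3) ℚ) * X 1 = (2 : ℚ) • X 1 := by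
      rw [MvPolynomial.smul_eq_C_mul, map_ofNat]
    rw [map_add, h2, D.map_smul, hu, hv, MvPolynomial.smul_eq_C_mul, map_ofNat, ← h2]
    ring
  induction n with
  | zero => simp [mul_comm]
  | succ n ih =>
    rw [Function.iterate_succ_apply', ih]
    have hwpow : D ((2 * X 1 + X 2) ^ n) =
        (n : MvPolynomial (Fin 3) ℚ) * (2 * X 1 ^ 2) * (2 * X 1 + X 2) ^ n := by
      rcases Nat.eq_zero_or_pos n with h | h
      · subst h; simp
      · rw [Derivation.leibniz_pow, hw, nsmul_eq_mul]
        calc (n : MvPolynomial (Fin 3) ℚ) *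
              ((2 * X 1 + X 2) ^ (n - 1) * (2 * X 1 ^ 2 * (2 * X 1 + X 2)))
            = (n : MvPolynomial (Fin 3) ℚ) * (2 * X 1 ^ 2) *
              ((2 * X 1 + X 2) ^ (n - 1) * (2 * X 1 + X 2)) := by ring
          _ = (n : MvPolynomial (Fin 3) ℚ) * (2 * X 1 ^ 2) * (2 * X 1 + X 2) ^ n := by
              rw [← pow_succ]; congr 2; omega
    have h0 : D (X 0 ^ 2) = 2 * X 0 * X 0 * X 1 ^ 2 := by
      rw [Derivation.leibniz_pow, ht]
      simp [smul_eq_mul]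
      ring
    have h1 : D (X 1 ^ (n + 1)) =
        ((n : MvPolynomial (Fin 3) ℚ) + 1) * X 1 ^ n * (X 1 ^ 2 * X 2) := by
      rw [Derivation.leibniz_pow, hu]
      simp [smul_eq_mul]
      ring
    rw [expand, expand, expand, hwpow, h0, h1, D.map_natCast]
    push_cast [Nat.factorial_succ]
    ring

/-- Let `D` be the derivation on `ℚ[t,u,v]` with `D(t) = tu²`, `D(u) = u²v`,
`D(v) = 4u³` (here `t = X 0`, `u = X 1`, `v = X 2`).  Then for all `n ≥ 0`,
`D^n(t²u) = n! t² Σ_{k=0}^{n} C(n,k) 2^{n−k} u^{2n+1−k} v^k`. -/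
theorem derivation_t2u_cube
    (D : Derivation ℚ (MvPolynomial (Fin 3) ℚ) (MvPolynomial (Fin 3) ℚ))
    (ht : D (X 0) = X 0 * X 1 ^ 2) (hu : D (X 1) = X 1 ^ 2 * X 2)
    (hv : D (X 2) = 4 * X 1 ^ 3) (n : ℕ) :
    (⇑D)^[n] (X 0 ^ 2 * X 1) =
      (n.factorial : MvPolynomial (Fin 3) ℚ) * X 0 ^ 2 *
        ∑ k ∈ Finset.range (n + 1),
          (n.choose k : MvPolynomial (Fin 3) ℚ) * 2 ^ (n - k) *
            X 1 ^ (2 * n + 1 - k) * X 2 ^ k := by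
  rw [sum_eq_pow_form, iter_eq D ht hu hv]
end
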